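/- arXiv:1207.6788 — 12 statements merged into one kernel-verified Lean document; each statement's English description precedes it below -/
import Mathlib

section
/- For fixed s ∈ (0,1], the function F_s(x) = (1 + x^s)^(1/s) / (1 + x) is non-decreasing on [0,1]. -/
/-!
On `(0, 1)` the derivative of `F_s` equals `(1 + x^s)^(1/s - 1) (x^(s-1) - 1) / (1 + x)^2`, which is
nonnegative because `x^(s-1) ≥ 1` for `0 < x ≤ 1` and `s ≤ 1`; continuity up to the endpoints then
gives monotonicity on `[0, 1]`.
-/

open Real Set

noncomputable def F (s x : ℝ) : ℝ := (1 + x ^ s) ^ (1 / s) / (1 + x)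

theorem continuousOn_F {s : ℝ} (hs : 0 < s) : ContinuousOn (F s) (Ici 0) := by
  have hpow : ContinuousOn (fun x : ℝ => 1 + x ^ s) (Ici 0) :=
    continuousOn_const.add fun x _ => (continuousAt_rpow_const x s (.inr hs.le)).continuousWithinAt
  refine (hpow.rpow_const fun _ _ => .inr (by positivity)).div (by fun_prop) fun x hx => ?_
  have : (0 : ℝ) ≤ x := hx
  positivity

theorem hasDerivAt_F {s x : ℝ} (hs : s ≠ 0) (hx : 0 < x) :
    HasDerivAt (F s) ((1 + x ^ s) ^ (1 / s - 1) * (x ^ (s - 1) - 1) / (1 + x) ^ 2) x := by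
  have hbase : 0 < 1 + x ^ s := by positivity
  have hnum := (((hasDerivAt_rpow_const (p := s) (.inl hx.ne')).const_add 1).rpow_const
    (p := 1 / s) (.inl hbase.ne')).div ((hasDerivAt_id x).const_add 1) (by positivity)
  refine hnum.congr_deriv ?_
  have hsplit : (1 + x ^ s) ^ (1 / s) = (1 + x ^ s) ^ (1 / s - 1) * (1 + x ^ s) := by
    rw [rpow_sub_one hbase.ne', div_mul_cancel₀ _ hbase.ne']
  have hxs : x ^ s = x ^ (s - 1) * x := by
    rw [rpow_sub_one hx.ne', div_mul_cancel₀ _ hx.ne']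
  rw [hsplit, id]
  generalize (1 + x ^ s) ^ (1 / s - 1) = a
  rw [hxs]
  field_simp
  ring

theorem F_monotone (s : ℝ) (hs : s ∈ Set.Ioc (0:ℝ) 1) :
    MonotoneOn (fun x : ℝ => (1 + x ^ s) ^ (1/s) / (1 + x)) (Set.Icc (0:ℝ) 1) := by
  obtain ⟨hs0, hs1⟩ := hs
  refine monotoneOn_of_hasDerivWithinAt_nonneg (convex_Icc 0 1)
    ((continuousOn_F hs0).mono Icc_subset_Ici_self)
    (fun x hx => (hasDerivAt_F hs0.ne' (interior_Icc.subset hx).1).hasDerivWithinAt) fun x hx => ?_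
  obtain ⟨hx0, hx1⟩ := interior_Icc.subset hx
  have hxpow : 1 ≤ x ^ (s - 1) := one_le_rpow_of_pos_of_le_one_of_nonpos hx0 hx1.le (by linarith)
  have hbase : 0 < 1 + x ^ s := by positivity
  exact div_nonneg (mul_nonneg (rpow_nonneg hbase.le _) (by linarith)) (sq_nonneg _)
end

section
/- For fixed s ∈ (0,1], the function f_s(k) = cosh(k·s)^(1/s) / cosh(k) is non-increasing on [0, ∞). -/
/-! The derivative of `cosh (k * s) ^ (1 / s) / cosh k` is
`cosh (k * s) ^ (1 / s - 1) * sinh (k * s - k) / cosh k ^ 2`, by the subtraction formula for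
`sinh`; for `k ≥ 0` and `s ≤ 1` we have `k * s ≤ k`, so it is nonpositive. -/

open Real Set

theorem hasDerivAt_cosh_mul_rpow_inv {s : ℝ} (hs : s ≠ 0) (k : ℝ) :
    HasDerivAt (fun k : ℝ => cosh (k * s) ^ (1 / s))
      (cosh (k * s) ^ (1 / s - 1) * sinh (k * s)) k := by
  have hcosh : HasDerivAt (fun k : ℝ => cosh (k * s)) (sinh (k * s) * s) k := by
    simpa using ((hasDerivAt_id k).mul_const s).cosh
  convert hcosh.rpow_const (p := 1 / s) (Or.inl (cosh_pos _).ne') using 1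
  field_simp

theorem hasDerivAt_cosh_mul_rpow_inv_div_cosh {s : ℝ} (hs : s ≠ 0) (k : ℝ) :
    HasDerivAt (fun k : ℝ => cosh (k * s) ^ (1 / s) / cosh k)
      (cosh (k * s) ^ (1 / s - 1) * sinh (k * s - k) / cosh k ^ 2) k := by
  have hc : cosh (k * s) ^ (1 / s) = cosh (k * s) ^ (1 / s - 1) * cosh (k * s) := by
    rw [← rpow_add_one (cosh_pos _).ne', sub_add_cancel]
  refine ((hasDerivAt_cosh_mul_rpow_inv hs k).div (hasDerivAt_cosh k)
    (cosh_pos k).ne').congr_deriv ?_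
  rw [sinh_sub, hc]
  ring

theorem f_antitone (s : ℝ) (hs : s ∈ Set.Ioc (0:ℝ) 1) :
    AntitoneOn (fun k : ℝ => (Real.cosh (k * s)) ^ (1/s) / Real.cosh k) (Set.Ici (0:ℝ)) := by
  obtain ⟨hs0, hs1⟩ := hs
  have hderiv := hasDerivAt_cosh_mul_rpow_inv_div_cosh hs0.ne'
  refine antitoneOn_of_hasDerivWithinAt_nonpos (convex_Ici 0)
    (fun k _ => (hderiv k).continuousAt.continuousWithinAt)
    (fun k _ => (hderiv k).hasDerivWithinAt) fun k hk => ?_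
  rw [interior_Ici, mem_Ioi] at hk
  have hsinh : sinh (k * s - k) ≤ 0 := sinh_nonpos_iff.mpr (by nlinarith)
  exact div_nonpos_of_nonpos_of_nonneg
    (mul_nonpos_of_nonneg_of_nonpos (rpow_nonneg (cosh_pos _).le _) hsinh) (sq_nonneg _)
end

section
/- For s ∈ (0,1] and all real k ≥ 0, one has 2^((s-1)/s) ≤ cosh(k·s)^(1/s) / cosh(k) ≤ 1. -/
open Real Set

private lemma aux_sub (a b : ℝ) (ha : 0 ≤ a) (hb : 0 ≤ b) {p : ℝ}
    (hp0 : 0 ≤ p) (hp1 : p ≤ 1) : (a + b) ^ p ≤ a ^ p + b ^ p := by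
  lift a to NNReal using ha
  lift b to NNReal using hb
  exact_mod_cast NNReal.rpow_add_le_add_rpow a b hp0 hp1

private lemma aux_concave (a b : ℝ) (ha : 0 ≤ a) (hb : 0 ≤ b) {p : ℝ}
    (hp : 1 ≤ p) : (a + b) ^ p ≤ 2 ^ (p - 1) * (a ^ p + b ^ p) := by
  lift a to NNReal using ha
  lift b to NNReal using hb
  exact_mod_cast NNReal.rpow_add_le_mul_rpow_add_rpow a b hp

theorem f_bounds (s : ℝ) (hs : s ∈ Set.Ioc (0:ℝ) 1) (k : ℝ) (hk : 0 ≤ k) :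
    (2:ℝ) ^ ((s - 1)/s) ≤ (Real.cosh (k * s)) ^ (1/s) / Real.cosh k ∧
    (Real.cosh (k * s)) ^ (1/s) / Real.cosh k ≤ 1 := by
  obtain ⟨hs0, hs1⟩ := hs
  have hsne : s ≠ 0 := ne_of_gt hs0
  have hc : 0 < Real.cosh k := Real.cosh_pos k
  have hd : 0 < Real.cosh (k * s) := Real.cosh_pos (k*s)
  have h2c : 2 * Real.cosh k = Real.exp k + Real.exp (-k) := by
    rw [Real.cosh_eq]; ring
  have h2d : 2 * Real.cosh (k * s) = Real.exp (k * s) + Real.exp (-(k * s)) := by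
    rw [Real.cosh_eq]; ring
  have hinv : (1:ℝ)/s * s = 1 := by field_simp
  have hinv' : s * (1/s) = 1 := by field_simp
  constructor
  · -- lower bound
    rw [le_div_iff₀ hc]
    have h1 : (2 * Real.cosh k) ^ s ≤ 2 * Real.cosh (k * s) := by
      rw [h2c, h2d]
      calc (Real.exp k + Real.exp (-k)) ^ s
          ≤ (Real.exp k) ^ s + (Real.exp (-k)) ^ s :=
            aux_sub _ _ (Real.exp_pos _).le (Real.exp_pos _).le hs0.le hs1
        _ = Real.exp (k * s) + Real.exp (-(k * s)) := by
            rw [← Real.exp_mul, ← Real.exp_mul, neg_mul]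
    have h2 : 2 ^ (s - 1) * (Real.cosh k) ^ s ≤ Real.cosh (k * s) := by
      have hm : (2 * Real.cosh k) ^ s = 2 ^ s * (Real.cosh k) ^ s :=
        Real.mul_rpow (by norm_num) hc.le
      have h2s : (2:ℝ) ^ (s - 1) = 2 ^ s / 2 := by
        rw [Real.rpow_sub (by norm_num), Real.rpow_one]
      rw [h2s]
      rw [hm] at h1
      nlinarith [Real.rpow_nonneg (le_of_lt hc) s]
    have h3 := Real.rpow_le_rpow (by positivity) h2 (by positivity : (0:ℝ) ≤ 1/s)
    calc (2:ℝ) ^ ((s-1)/s) * Real.cosh k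
        = (2 ^ (s - 1) * (Real.cosh k) ^ s) ^ (1/s) := by
          rw [Real.mul_rpow (by positivity) (by positivity),
            ← Real.rpow_mul (by norm_num : (0:ℝ) ≤ 2),
            ← Real.rpow_mul hc.le, hinv', Real.rpow_one]
          congr 1
          ring
      _ ≤ Real.cosh (k * s) ^ (1/s) := h3
  · -- upper bound
    rw [div_le_one hc]
    have hp : (1:ℝ) ≤ 1/s := by
      rw [le_div_iff₀ hs0]; linarith
    have h1 : (2 * Real.cosh (k * s)) ^ (1/s) ≤ 2 ^ (1/s) * Real.cosh k := by
      rw [h2d]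
      calc (Real.exp (k * s) + Real.exp (-(k * s))) ^ (1/s)
          ≤ 2 ^ (1/s - 1) * ((Real.exp (k * s)) ^ (1/s) + (Real.exp (-(k * s))) ^ (1/s)) :=
            aux_concave _ _ (Real.exp_pos _).le (Real.exp_pos _).le hp
        _ = 2 ^ (1/s - 1) * (2 * Real.cosh k) := by
            rw [← Real.exp_mul, ← Real.exp_mul, mul_assoc, hinv', mul_one, neg_mul,
              mul_assoc, hinv', mul_one, h2c]
        _ = 2 ^ (1/s) * Real.cosh k := by
            rw [Real.rpow_sub (by norm_num), Real.rpow_one]; ring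
    have hm : (2 * Real.cosh (k * s)) ^ (1/s) = 2 ^ (1/s) * (Real.cosh (k * s)) ^ (1/s) :=
      Real.mul_rpow (by norm_num) hd.le
    rw [hm] at h1
    have h2pos : (0:ℝ) < 2 ^ (1/s) := Real.rpow_pos_of_pos (by norm_num) _
    exact le_of_mul_le_mul_left h1 h2pos
end

section
/- For fixed ρ ≥ 0, the function g(ρ, z) = ((1/2)(1+z)^(1/(1+ρ)) + (1/2)(1-z)^(1/(1+ρ)))^(1+ρ) is non-increasing in z on [0,1]. -/
/-!
With `p = 1/(1+ρ) ∈ (0,1]`, the map `t ↦ t ^ p` is concave on `[0, ∞)`, so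
`φ z = (1+z)^p + (1-z)^p` is concave and even on `[-1,1]`. An even concave function is
non-increasing on the nonnegative half: `z ∈ [0, w]` lies on the segment `[-w, w]`, where `φ` is at
least `min (φ (-w)) (φ w) = φ w`. Finally `g ρ z = (φ z / 2) ^ (1+ρ)` with a positive exponent.
-/

open Real Set

noncomputable def g (ρ z : ℝ) : ℝ :=
  ((1/2) * (1 + z) ^ (1/(1+ρ)) + (1/2) * (1 - z) ^ (1/(1+ρ))) ^ (1+ρ)

theorem ConcaveOn.antitoneOn_of_neg_eq {s : Set ℝ} {f : ℝ → ℝ} (hf : ConcaveOn ℝ s f)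
    (hs : ∀ x ∈ s, -x ∈ s) (hf_neg : ∀ x ∈ s, f (-x) = f x) :
    AntitoneOn f (s ∩ Ici 0) := by
  rintro a ⟨-, ha : 0 ≤ a⟩ b ⟨hb, -⟩ hab
  have hseg : a ∈ segment ℝ (-b) b := by
    rw [segment_eq_Icc (by linarith)]
    exact ⟨by linarith, hab⟩
  simpa [hf_neg b hb] using hf.ge_on_segment (hs b hb) hb hseg

theorem ConcaveOn.add_comp_one_sub {f : ℝ → ℝ} (hf : ConcaveOn ℝ (Ici 0) f) :
    ConcaveOn ℝ (Icc (-1) 1) fun z => f (1 + z) + f (1 - z) := by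
  have h₁ : ConcaveOn ℝ (Icc (-1) 1) fun z => f (1 + z) :=
    (hf.translate_right 1).subset (fun z hz => show (0 : ℝ) ≤ 1 + z by linarith [hz.1])
      (convex_Icc _ _)
  have h₂ : ConcaveOn ℝ (Icc (-1) 1) fun z => f (1 - z) :=
    (hf.comp_affineMap (AffineMap.const ℝ ℝ (1 : ℝ) - AffineMap.id ℝ ℝ)).subset
      (fun z hz => show (0 : ℝ) ≤ 1 - z by linarith [hz.2]) (convex_Icc _ _)
  exact h₁.add h₂

theorem ConcaveOn.antitoneOn_add_comp_one_sub {f : ℝ → ℝ} (hf : ConcaveOn ℝ (Ici 0) f) :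
    AntitoneOn (fun z => f (1 + z) + f (1 - z)) (Icc 0 1) := by
  refine (hf.add_comp_one_sub.antitoneOn_of_neg_eq ?_ ?_).mono ?_
  · exact fun x hx => ⟨by linarith [hx.2], by linarith [hx.1]⟩
  · intro x _
    rw [sub_neg_eq_add, ← sub_eq_add_neg, add_comm]
  · exact fun z hz => ⟨⟨by linarith [hz.1], hz.2⟩, hz.1⟩

theorem g_antitone (ρ : ℝ) (hρ : 0 ≤ ρ) :
    AntitoneOn (fun z => g ρ z) (Set.Icc (0:ℝ) 1) := by
  have hp : 1 / (1 + ρ) ≤ 1 := by rw [div_le_one (by linarith)]; linarith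
  have hφ := (concaveOn_rpow (by positivity) hp).antitoneOn_add_comp_one_sub
  intro a ha b hb hab
  have hφb : 0 ≤ (1 + b) ^ (1 / (1 + ρ)) + (1 - b) ^ (1 / (1 + ρ)) :=
    add_nonneg (rpow_nonneg (by linarith [hb.1]) _) (rpow_nonneg (by linarith [hb.2]) _)
  exact rpow_le_rpow (by linarith) (by linarith [hφ ha hb hab]) (by linarith)
end

section
/- For ρ ≥ 0 and z ∈ [0,1], the function g(ρ, z) = ((1/2)(1+z)^(1/(1+ρ)) + (1/2)(1-z)^(1/(1+ρ)))^(1+ρ) satisfies 2^(-ρ) ≤ g(ρ, z) ≤ 1. -/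
open Real Set

/-!
`g ρ z` is the power mean of exponent `1/(1+ρ)` of `1 + z` and `1 - z`. It lies below
their arithmetic mean `1` by convexity of `t ↦ t ^ (1+ρ)`, and above `2 ^ (-ρ)` because
`t ↦ t ^ (1+ρ)` is superadditive:
`(1 + z) + (1 - z) ≤ ((1 + z) ^ (1/(1+ρ)) + (1 - z) ^ (1/(1+ρ))) ^ (1+ρ)`.
-/

namespace Real

variable {q x y : ℝ}

lemma rpow_one_div_rpow (hx : 0 ≤ x) (hq : q ≠ 0) : (x ^ (1 / q)) ^ q = x := by
  rw [one_div, rpow_inv_rpow hx hq]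

lemma mean_rpow_one_div_rpow_le_mean (hx : 0 ≤ x) (hy : 0 ≤ y) (hq : 1 ≤ q) :
    ((1/2) * x ^ (1/q) + (1/2) * y ^ (1/q)) ^ q ≤ (1/2) * x + (1/2) * y := by
  have hq0 : q ≠ 0 := by positivity
  have hhalf : (0:ℝ) ≤ 1/2 := by norm_num
  have h := (convexOn_rpow hq).2 (mem_Ici.2 (rpow_nonneg hx (1/q)))
    (mem_Ici.2 (rpow_nonneg hy (1/q))) hhalf hhalf (by norm_num)
  simpa only [smul_eq_mul, rpow_one_div_rpow hx hq0, rpow_one_div_rpow hy hq0] using h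

lemma two_rpow_neg_mul_add_le_mean_rpow_one_div_rpow (hx : 0 ≤ x) (hy : 0 ≤ y) (hq : 1 ≤ q) :
    (2:ℝ) ^ (-q) * (x + y) ≤ ((1/2) * x ^ (1/q) + (1/2) * y ^ (1/q)) ^ q := by
  have hq0 : q ≠ 0 := by positivity
  have hsuper : x + y ≤ (x ^ (1/q) + y ^ (1/q)) ^ q := by
    simpa only [rpow_one_div_rpow hx hq0, rpow_one_div_rpow hy hq0] using
      add_rpow_le_rpow_add (rpow_nonneg hx (1/q)) (rpow_nonneg hy (1/q)) hq
  calc (2:ℝ) ^ (-q) * (x + y) ≤ (1/2) ^ q * (x ^ (1/q) + y ^ (1/q)) ^ q := by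
        rw [rpow_neg zero_le_two, ← inv_rpow zero_le_two, ← one_div]
        gcongr
    _ = ((1/2) * x ^ (1/q) + (1/2) * y ^ (1/q)) ^ q := by
        rw [← mul_rpow (by norm_num) (by positivity), mul_add]

end Real

theorem g_bounds (ρ : ℝ) (hρ : 0 ≤ ρ) (z : ℝ) (hz : z ∈ Set.Icc (0:ℝ) 1) :
    (2:ℝ) ^ (-ρ) ≤ g ρ z ∧ g ρ z ≤ 1 := by
  obtain ⟨hz0, hz1⟩ := hz
  have hx : 0 ≤ 1 + z := by linarith
  have hy : 0 ≤ 1 - z := by linarith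
  have hq : 1 ≤ 1 + ρ := by linarith
  constructor
  · calc (2:ℝ) ^ (-ρ) = (2:ℝ) ^ (-(1 + ρ)) * ((1 + z) + (1 - z)) := by
          rw [neg_add, rpow_add two_pos, rpow_neg_one]; ring
      _ ≤ g ρ z := two_rpow_neg_mul_add_le_mean_rpow_one_div_rpow hx hy hq
  · calc g ρ z ≤ (1/2) * (1 + z) + (1/2) * (1 - z) := mean_rpow_one_div_rpow_le_mean hx hy hq
      _ = 1 := by ring
end

section
/- For ρ ≥ 0 and z1, z2 ∈ [0,1] with z1·z2 < 1, one has g(ρ, (z1+z2)/(1+z1·z2)) ≤ g(ρ, (z1-z2)/(1-z1·z2)), where g(ρ, z) = g(ρ, |z|) for negative arguments. -/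
open Real Set

/-!
For `p = 1/(1+ρ) ∈ (0, 1]` the map `z ↦ (1+z)^p + (1-z)^p` decreases on `[0, 1]`: its derivative
`p((1+z)^(p-1) - (1-z)^(p-1))` is nonpositive because `t ↦ t^(p-1)` is antitone. Hence `g ρ`
is antitone on `[0, 1]`, and it remains to compare the arguments: both lie in `[0, 1]`, and
cross-multiplying, `|z₁ - z₂| / (1 - z₁z₂) ≤ (z₁ + z₂) / (1 + z₁z₂)` reduces to
`min z₁ z₂ · (1 - (max z₁ z₂)²) ≥ 0`.
-/

lemma hasDerivAt_one_add_rpow_add_one_sub_rpow {p x : ℝ} (hx : x ∈ Ioo (-1 : ℝ) 1) :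
    HasDerivAt (fun z : ℝ => (1 + z) ^ p + (1 - z) ^ p)
      (p * (1 + x) ^ (p - 1) - p * (1 - x) ^ (p - 1)) x := by
  have hplus : HasDerivAt (fun z : ℝ => (1 + z) ^ p) (p * (1 + x) ^ (p - 1)) x := by
    simpa using ((hasDerivAt_id' x).const_add 1).rpow_const (p := p)
      (Or.inl (by linarith [hx.1] : 1 + x ≠ 0))
  have hminus : HasDerivAt (fun z : ℝ => (1 - z) ^ p) (-(p * (1 - x) ^ (p - 1))) x := by
    simpa using ((hasDerivAt_id' x).const_sub 1).rpow_const (p := p)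
      (Or.inl (by linarith [hx.2] : 1 - x ≠ 0))
  exact (hplus.add hminus).congr_deriv (sub_eq_add_neg _ _).symm

lemma antitoneOn_one_add_rpow_add_one_sub_rpow {p : ℝ} (hp0 : 0 ≤ p) (hp1 : p ≤ 1) :
    AntitoneOn (fun z : ℝ => (1 + z) ^ p + (1 - z) ^ p) (Icc 0 1) := by
  have hcont : ContinuousOn (fun z : ℝ => (1 + z) ^ p + (1 - z) ^ p) (Icc 0 1) := by
    refine ContinuousOn.add ?_ ?_ <;>
      exact ContinuousOn.rpow_const (by fun_prop) fun _ _ => Or.inr hp0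
  refine antitoneOn_of_deriv_nonpos (convex_Icc 0 1) hcont ?_ ?_ <;> rw [interior_Icc]
  · exact fun x hx =>
      (hasDerivAt_one_add_rpow_add_one_sub_rpow ⟨by linarith [hx.1], hx.2⟩).differentiableAt
        |>.differentiableWithinAt
  · intro x hx
    rw [(hasDerivAt_one_add_rpow_add_one_sub_rpow ⟨by linarith [hx.1], hx.2⟩).deriv]
    have hpow : (1 + x) ^ (p - 1) ≤ (1 - x) ^ (p - 1) :=
      rpow_le_rpow_of_nonpos (by linarith [hx.2]) (by linarith [hx.1]) (by linarith)
    nlinarith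

lemma g_antitoneOn {ρ : ℝ} (hρ : 0 ≤ ρ) : AntitoneOn (g ρ) (Icc 0 1) := by
  intro a ha b hb hab
  have hp0 : 0 ≤ 1 / (1 + ρ) := by positivity
  have hp1 : 1 / (1 + ρ) ≤ 1 := by rw [div_le_one (by linarith)]; linarith
  have hsum := antitoneOn_one_add_rpow_add_one_sub_rpow hp0 hp1 ha hb hab
  have hplus : 0 ≤ (1 + b) ^ (1 / (1 + ρ)) := rpow_nonneg (by linarith [hb.1]) _
  have hminus : 0 ≤ (1 - b) ^ (1 / (1 + ρ)) := rpow_nonneg (by linarith [hb.2]) _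
  exact rpow_le_rpow (by positivity) (by linarith [hsum]) (by linarith)

lemma abs_sub_div_one_sub_mul_le_add_div_one_add_mul {z₁ z₂ : ℝ}
    (h₁ : z₁ ∈ Icc (0 : ℝ) 1) (h₂ : z₂ ∈ Icc (0 : ℝ) 1) (hlt : z₁ * z₂ < 1) :
    |z₁ - z₂| / (1 - z₁ * z₂) ≤ (z₁ + z₂) / (1 + z₁ * z₂) := by
  obtain ⟨h₁0, h₁1⟩ := h₁
  obtain ⟨h₂0, h₂1⟩ := h₂
  rw [div_le_div_iff₀ (by linarith) (by positivity)]
  rcases le_total z₂ z₁ with h | h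
  · rw [abs_of_nonneg (sub_nonneg.2 h)]
    nlinarith [mul_nonneg (mul_nonneg h₂0 (sub_nonneg.2 h₁1)) (add_nonneg zero_le_one h₁0)]
  · rw [abs_of_nonpos (sub_nonpos.2 h)]
    nlinarith [mul_nonneg (mul_nonneg h₁0 (sub_nonneg.2 h₂1)) (add_nonneg zero_le_one h₂0)]

lemma add_div_one_add_mul_mem_Icc {z₁ z₂ : ℝ}
    (h₁ : z₁ ∈ Icc (0 : ℝ) 1) (h₂ : z₂ ∈ Icc (0 : ℝ) 1) :
    (z₁ + z₂) / (1 + z₁ * z₂) ∈ Icc (0 : ℝ) 1 := by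
  obtain ⟨h₁0, h₁1⟩ := h₁
  obtain ⟨h₂0, h₂1⟩ := h₂
  refine ⟨by positivity, (div_le_one (by positivity)).2 ?_⟩
  nlinarith [mul_nonneg (sub_nonneg.2 h₁1) (sub_nonneg.2 h₂1)]

theorem g_plus_le_g_minus (ρ : ℝ) (hρ : 0 ≤ ρ) (z1 z2 : ℝ)
    (h1 : z1 ∈ Set.Icc (0:ℝ) 1) (h2 : z2 ∈ Set.Icc (0:ℝ) 1) (hlt : z1 * z2 < 1) :
    g ρ ((z1 + z2)/(1 + z1 * z2)) ≤ g ρ (|z1 - z2|/(1 - z1 * z2)) := by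
  have hle := abs_sub_div_one_sub_mul_le_add_div_one_add_mul h1 h2 hlt
  have hplus := add_div_one_add_mul_mem_Icc h1 h2
  have hminus : |z1 - z2| / (1 - z1 * z2) ∈ Icc (0 : ℝ) 1 :=
    ⟨div_nonneg (abs_nonneg _) (by linarith), hle.trans hplus.2⟩
  exact g_antitoneOn hρ hminus hplus hle
end

section
/- For s ∈ (0,1] and real numbers a, b with a ≥ |b| ≥ 0, letting u = (cosh(b·s)/cosh(a·s))^(1/s) and v = cosh(b)/cosh(a), one has u ≥ v. -/
open Real

lemma tanh_mono' {x y : ℝ} (h : x ≤ y) : Real.tanh x ≤ Real.tanh y := by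
  rw [Real.tanh_eq_sinh_div_cosh, Real.tanh_eq_sinh_div_cosh,
    div_le_div_iff₀ (Real.cosh_pos x) (Real.cosh_pos y)]
  have h1 : Real.sinh (x - y) ≤ 0 := Real.sinh_nonpos_iff.mpr (by linarith)
  have h2 := Real.sinh_sub x y
  linarith

lemma g_hasDerivAt (s : ℝ) (hs0 : 0 < s) (k : ℝ) :
    HasDerivAt (fun k : ℝ => (1/s) * Real.log (Real.cosh (k*s)) - Real.log (Real.cosh k))
      (Real.tanh (k*s) - Real.tanh k) k := by
  have h1 : HasDerivAt (fun k : ℝ => k * s) s k := by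
    simpa using (hasDerivAt_id k).mul_const s
  have h2 : HasDerivAt (fun k : ℝ => Real.cosh (k*s)) (Real.sinh (k*s) * s) k :=
    by have := (Real.hasDerivAt_cosh (k*s)).comp k h1; exact this
  have h3 : HasDerivAt (fun k : ℝ => Real.log (Real.cosh (k*s)))
      ((Real.sinh (k*s) * s) / Real.cosh (k*s)) k :=
    h2.log (ne_of_gt (Real.cosh_pos _))
  have h4 : HasDerivAt (fun k : ℝ => Real.log (Real.cosh k))
      (Real.sinh k / Real.cosh k) k :=
    (Real.hasDerivAt_cosh k).log (ne_of_gt (Real.cosh_pos _))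
  have h5 := (h3.const_mul (1/s)).sub h4
  convert h5 using 1
  pick_goal 4
  rw [Real.tanh_eq_sinh_div_cosh, Real.tanh_eq_sinh_div_cosh]
  field_simp
  all_goals rfl

lemma g_anti (s : ℝ) (hs0 : 0 < s) (hs1 : s ≤ 1) :
    AntitoneOn (fun k : ℝ => (1/s) * Real.log (Real.cosh (k*s)) - Real.log (Real.cosh k))
      (Set.Ici 0) := by
  apply antitoneOn_of_deriv_nonpos (convex_Ici 0)
  · exact Continuous.continuousOn (by
      fun_prop (disch := intro x; exact ne_of_gt (Real.cosh_pos _)))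
  · intro k hk
    exact (g_hasDerivAt s hs0 k).differentiableAt.differentiableWithinAt
  · intro k hk
    rw [interior_Ici] at hk
    rw [(g_hasDerivAt s hs0 k).deriv]
    have hk0 : 0 < k := hk
    have : k * s ≤ k := by nlinarith
    linarith [tanh_mono' this]

theorem u_ge_v (s : ℝ) (hs : s ∈ Set.Ioc (0:ℝ) 1) (a b : ℝ) (hab : |b| ≤ a) :
    (Real.cosh (b * s)) ^ (1/s) / (Real.cosh (a * s)) ^ (1/s) ≥ Real.cosh b / Real.cosh a := by
  obtain ⟨hs0, hs1⟩ := hs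
  have ha0 : (0:ℝ) ≤ a := le_trans (abs_nonneg b) hab
  have key := g_anti s hs0 hs1 (Set.mem_Ici.mpr (abs_nonneg b)) (Set.mem_Ici.mpr ha0) hab
  simp only at key
  have habs : Real.cosh (|b| * s) = Real.cosh (b * s) := by
    rw [show |b| * s = |b * s| by rw [abs_mul, abs_of_pos hs0], Real.cosh_abs]
  rw [habs, Real.cosh_abs] at key
  -- key : (1/s) * log (cosh (b*s)) - log (cosh b) ≥ (1/s) * log (cosh (a*s)) - log (cosh a)
  have e1 : Real.cosh (b * s) ^ (1/s) = Real.exp ((1/s) * Real.log (Real.cosh (b*s))) := by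
    rw [Real.rpow_def_of_pos (Real.cosh_pos _), mul_comm]
  have e2 : Real.cosh (a * s) ^ (1/s) = Real.exp ((1/s) * Real.log (Real.cosh (a*s))) := by
    rw [Real.rpow_def_of_pos (Real.cosh_pos _), mul_comm]
  have e3 : Real.cosh b = Real.exp (Real.log (Real.cosh b)) :=
    (Real.exp_log (Real.cosh_pos _)).symm
  have e4 : Real.cosh a = Real.exp (Real.log (Real.cosh a)) :=
    (Real.exp_log (Real.cosh_pos _)).symm
  rw [e1, e2, e3, e4, ← Real.exp_sub, ← Real.exp_sub, ge_iff_le, Real.exp_le_exp]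
  linarith
end

section
/- For s ∈ (0,1] and a, b ∈ ℝ with a ≥ |b|, the inequality (1 + u^s)^(1/s)/(1+u) ≥ (1 + v^s)^(1/s)/(1+v) holds, where u = cosh(b·s)^(1/s)/cosh(a·s)^(1/s) and v = cosh(b)/cosh(a). -/
/-! Substituting t = x / (1 + x) turns (1 + x ^ s) ^ (1 / s) / (1 + x) into
(t ^ s + (1 - t) ^ s) ^ (1 / s). For s ∈ (0, 1] the function t ^ s + (1 - t) ^ s is concave and
symmetric about 1 / 2, so it increases on [0, 1 / 2], and the left-hand function increases on
[0, 1]. It remains to show v ≤ u: after taking logarithms this says that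
log (cosh x) - log (cosh (x * s)) / s increases on [0, ∞), and its derivative
tanh x - tanh (x * s) is nonnegative there. -/

open Real Set

lemma concaveOn_rpow_add_one_sub_rpow {s : ℝ} (hs0 : 0 ≤ s) (hs1 : s ≤ 1) :
    ConcaveOn ℝ (Icc 0 1) fun t : ℝ ↦ t ^ s + (1 - t) ^ s := by
  have hleft := (concaveOn_rpow hs0 hs1).subset Icc_subset_Ici_self (convex_Icc 0 1)
  have hright : ConcaveOn ℝ (Icc 0 1) fun t : ℝ ↦ (1 - t) ^ s := by
    have := ((concaveOn_rpow hs0 hs1).comp_affineMap (AffineMap.lineMap (1 : ℝ) 0))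
    refine (this.subset (fun t ht ↦ ?_) (convex_Icc 0 1)).congr (fun t _ ↦ ?_)
    · simpa [AffineMap.lineMap_apply_ring'] using ht.2
    · simp [AffineMap.lineMap_apply_ring', neg_add_eq_sub]
  exact hleft.add hright

lemma ConcaveOn.monotoneOn_of_map_add_sub_eq {f : ℝ → ℝ} {a b : ℝ}
    (hf : ConcaveOn ℝ (Icc a b) f) (hsymm : ∀ t ∈ Icc a b, f (a + b - t) = f t) :
    MonotoneOn f (Icc a ((a + b) / 2)) := by
  intro x ⟨hax, hxm⟩ y ⟨_, hym⟩ hxy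
  have hx : x ∈ Icc a b := ⟨hax, by linarith⟩
  have hmin := hf.min_le_of_mem_Icc (y := a + b - x) hx ⟨by linarith, by linarith⟩
    ⟨hxy, by linarith⟩
  rwa [hsymm x hx, min_self] at hmin

lemma one_add_rpow_rpow_div_one_add_eq {s x : ℝ} (hs : s ≠ 0) (hx : 0 ≤ x) :
    (1 + x ^ s) ^ (1 / s) / (1 + x) = ((x / (1 + x)) ^ s + (1 - x / (1 + x)) ^ s) ^ (1 / s) := by
  have h1x : 0 < 1 + x := by positivity
  rw [one_sub_div h1x.ne', add_sub_cancel_right, div_rpow hx h1x.le, div_rpow zero_le_one h1x.le,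
    one_rpow, ← add_div, add_comm (x ^ s), div_rpow (by positivity) (by positivity),
    one_div, rpow_rpow_inv h1x.le hs]

lemma monotoneOn_one_add_rpow_rpow_div_one_add {s : ℝ} (hs0 : 0 < s) (hs1 : s ≤ 1) :
    MonotoneOn (fun x : ℝ ↦ (1 + x ^ s) ^ (1 / s) / (1 + x)) (Icc 0 1) := by
  have hsymm : ∀ t ∈ Icc (0 : ℝ) 1,
      (0 + 1 - t) ^ s + (1 - (0 + 1 - t)) ^ s = t ^ s + (1 - t) ^ s :=
    fun t _ ↦ by rw [zero_add, sub_sub_cancel, add_comm]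
  have hmono := (concaveOn_rpow_add_one_sub_rpow hs0.le hs1).monotoneOn_of_map_add_sub_eq hsymm
  rw [zero_add] at hmono
  have hmaps : MapsTo (fun x : ℝ ↦ x / (1 + x)) (Icc 0 1) (Icc 0 (1 / 2)) := by
    intro x ⟨hx0, hx1⟩
    refine ⟨by positivity, ?_⟩
    rw [div_le_iff₀ (by positivity)]
    linarith
  intro x hx y hy hxy
  dsimp only
  rw [one_add_rpow_rpow_div_one_add_eq hs0.ne' hx.1, one_add_rpow_rpow_div_one_add_eq hs0.ne' hy.1]
  refine rpow_le_rpow ?_ (hmono (hmaps hx) (hmaps hy) ?_) (by positivity)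
  · obtain ⟨ht0, ht1⟩ := hmaps hx
    exact add_nonneg (rpow_nonneg ht0 s) (rpow_nonneg (by linarith) s)
  · rw [div_le_div_iff₀ (by linarith [hx.1]) (by linarith [hy.1])]
    linarith

lemma Real.monotone_tanh : Monotone tanh := by
  intro x y hxy
  have hmem : ∀ z, tanh z ∈ Ioo (-1) 1 := fun z ↦ ⟨neg_one_lt_tanh z, tanh_lt_one z⟩
  rwa [← artanh_le_artanh_iff (hmem x) (hmem y), artanh_tanh, artanh_tanh]

lemma Real.hasDerivAt_log_cosh (x : ℝ) : HasDerivAt (fun y ↦ log (cosh y)) (tanh x) x := by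
  rw [tanh_eq_sinh_div_cosh]
  exact (hasDerivAt_cosh x).log (cosh_pos x).ne'

lemma monotoneOn_log_cosh_sub_log_cosh_mul_div {s : ℝ} (hs0 : 0 < s) (hs1 : s ≤ 1) :
    MonotoneOn (fun x ↦ log (cosh x) - log (cosh (x * s)) / s) (Ici 0) := by
  have hderiv (x : ℝ) : HasDerivAt (fun x ↦ log (cosh x) - log (cosh (x * s)) / s)
      (tanh x - tanh (x * s) * s / s) x := by
    have hinner := (hasDerivAt_log_cosh (x * s)).comp x (hasDerivAt_mul_const s)
    exact (hasDerivAt_log_cosh x).sub (hinner.div_const s)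
  refine monotoneOn_of_hasDerivWithinAt_nonneg (convex_Ici 0)
    (fun x _ ↦ (hderiv x).continuousAt.continuousWithinAt)
    (fun x _ ↦ (hderiv x).hasDerivWithinAt) (fun x hx ↦ ?_)
  rw [interior_Ici, mem_Ioi] at hx
  rw [mul_div_cancel_right₀ _ hs0.ne', sub_nonneg]
  exact monotone_tanh (mul_le_of_le_one_right hx.le hs1)

lemma cosh_div_cosh_le_rpow {s a b : ℝ} (hs0 : 0 < s) (hs1 : s ≤ 1) (hab : |b| ≤ a) :
    cosh b / cosh a ≤ (cosh (b * s) / cosh (a * s)) ^ (1 / s) := by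
  have hmono := monotoneOn_log_cosh_sub_log_cosh_mul_div hs0 hs1 (abs_nonneg b)
    ((abs_nonneg b).trans hab) hab
  dsimp only at hmono
  rw [← cosh_abs b, ← cosh_abs (b * s), abs_mul, abs_of_pos hs0,
    ← log_le_log_iff (by positivity) (by positivity), log_rpow (by positivity),
    log_div (cosh_pos _).ne' (cosh_pos _).ne', log_div (cosh_pos _).ne' (cosh_pos _).ne',
    one_div_mul_eq_div, sub_div]
  linarith

lemma cosh_div_cosh_mem_Icc {x y : ℝ} (h : |x| ≤ |y|) : cosh x / cosh y ∈ Icc 0 1 :=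
  ⟨by positivity, div_le_one_of_le₀ (cosh_le_cosh.2 h) (cosh_pos y).le⟩

theorem F_u_ge_F_v (s : ℝ) (hs : s ∈ Set.Ioc (0:ℝ) 1) (a b : ℝ) (hab : |b| ≤ a) :
    (1 + ((Real.cosh (b * s)) ^ (1/s) / (Real.cosh (a * s)) ^ (1/s)) ^ s) ^ (1/s) /
      (1 + (Real.cosh (b * s)) ^ (1/s) / (Real.cosh (a * s)) ^ (1/s)) ≥
    (1 + (Real.cosh b / Real.cosh a) ^ s) ^ (1/s) / (1 + Real.cosh b / Real.cosh a) := by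
  obtain ⟨hs0, hs1⟩ := hs
  have hab' : |b| ≤ |a| := hab.trans (le_abs_self a)
  have habs : |b * s| ≤ |a * s| := by
    rw [abs_mul, abs_mul]
    exact mul_le_mul_of_nonneg_right hab' (abs_nonneg s)
  have hu : (cosh (b * s) / cosh (a * s)) ^ (1 / s) ∈ Icc 0 1 := by
    obtain ⟨h0, h1⟩ := cosh_div_cosh_mem_Icc habs
    exact ⟨rpow_nonneg h0 _, rpow_le_one h0 h1 (by positivity)⟩
  rw [← div_rpow (cosh_pos _).le (cosh_pos _).le]
  exact monotoneOn_one_add_rpow_rpow_div_one_add hs0 hs1 (cosh_div_cosh_mem_Icc hab') hu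
    (cosh_div_cosh_le_rpow hs0 hs1 hab)
end

section
/- For s ∈ (0,1] and t, w ≥ 0, the product identity g((1-s)/s, tanh t)·g((1-s)/s, tanh w) = (( (cosh(s(t+w)) + cosh(s(t-w)) )/2 )^(1/s)) / (cosh(t)·cosh(w)) holds, where g(ρ, z) = ((1/2)(1+z)^(1/(1+ρ)) + (1/2)(1-z)^(1/(1+ρ)))^(1+ρ). -/
open Real

/-!
Since `1 ± tanh x = e^{±x} / cosh x`, the quantity `g ρ (tanh x)` is, up to the factor
`cosh x`, the power mean of exponent `p = 1/(1+ρ)` of `e^x` and `e^{-x}`, which is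
`cosh (p x) ^ (1/p)`. For `ρ = (1-s)/s` this gives `g ρ (tanh x) = cosh (s x) ^ (1/s) / cosh x`,
and the product-to-sum formula for `cosh (s t) * cosh (s w)` finishes the proof.
-/

namespace Real

lemma one_add_tanh (x : ℝ) : 1 + tanh x = exp x / cosh x := by
  rw [tanh_eq_sinh_div_cosh, ← cosh_add_sinh]
  field_simp

lemma one_sub_tanh (x : ℝ) : 1 - tanh x = exp (-x) / cosh x := by
  rw [tanh_eq_sinh_div_cosh, ← cosh_sub_sinh]
  field_simp

lemma cosh_mul_cosh (a b : ℝ) : cosh a * cosh b = (cosh (a + b) + cosh (a - b)) / 2 := by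
  rw [cosh_add, cosh_sub]
  ring

lemma average_rpow_exp_div_cosh (p x : ℝ) :
    (1/2) * (exp x / cosh x) ^ p + (1/2) * (exp (-x) / cosh x) ^ p = cosh (p * x) / cosh x ^ p := by
  have hc := (cosh_pos x).le
  rw [div_rpow (exp_nonneg _) hc, div_rpow (exp_nonneg _) hc, ← exp_mul, ← exp_mul, neg_mul,
    mul_comm x, cosh_eq (p * x)]
  ring

end Real

lemma g_tanh {ρ : ℝ} (hρ : 1 + ρ ≠ 0) (x : ℝ) :
    g ρ (tanh x) = cosh (x / (1 + ρ)) ^ (1 + ρ) / cosh x := by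
  have hc := cosh_pos x
  rw [g, one_add_tanh, one_sub_tanh, average_rpow_exp_div_cosh,
    div_rpow (cosh_pos _).le (rpow_pos_of_pos hc _).le, ← rpow_mul hc.le, one_div_mul_cancel hρ,
    rpow_one, one_div_mul_eq_div]

theorem g_product_identity_general (s : ℝ) (hs : s ∈ Set.Ioc (0:ℝ) 1) (t w : ℝ) :
    g ((1 - s)/s) (Real.tanh t) * g ((1 - s)/s) (Real.tanh w) =
      ((Real.cosh (s * (t + w)) + Real.cosh (s * (t - w)))/2) ^ (1/s) /
        (Real.cosh t * Real.cosh w) := by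
  have hs0 : s ≠ 0 := hs.1.ne'
  have hρ : 1 + (1 - s)/s = 1/s := by field_simp; ring
  have hg (x : ℝ) : g ((1 - s)/s) (tanh x) = cosh (s * x) ^ (1/s) / cosh x := by
    rw [g_tanh (hρ ▸ one_div_ne_zero hs0), hρ, div_div_eq_mul_div, div_one, mul_comm]
  rw [hg, hg, mul_add, mul_sub, ← cosh_mul_cosh,
    mul_rpow (cosh_pos _).le (cosh_pos _).le, div_mul_div_comm]

theorem g_product_identity (s : ℝ) (hs : s ∈ Set.Ioc (0:ℝ) 1) (t w : ℝ)
    (ht : 0 ≤ t) (hw : 0 ≤ w) :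
    g ((1 - s)/s) (Real.tanh t) * g ((1 - s)/s) (Real.tanh w) =
      ((Real.cosh (s * (t + w)) + Real.cosh (s * (t - w)))/2) ^ (1/s) /
        (Real.cosh t * Real.cosh w) :=
  g_product_identity_general s hs t w
end

section
/- For ρ ≥ 0 and all z1, z2 ∈ [0,1] (with z1·z2 < 1), the pointwise inequality g(ρ, z1)·g(ρ, z2) ≥ g(ρ, z1·z2)·h(ρ, z1, z2) holds. -/
open Real

lemma phi_anti {p : ℝ} (hp0 : 0 ≤ p) (hp1 : p ≤ 1) {v u : ℝ} (hv : 0 ≤ v) (hvu : v ≤ u)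
    (hu : u ≤ 1) : (1+u)^p + (1-u)^p ≤ (1+v)^p + (1-v)^p := by
  rcases eq_or_lt_of_le (hv.trans hvu) with h0 | hupos
  · have hv0 : v = 0 := le_antisymm (hvu.trans h0.symm.le) hv
    rw [← h0, hv0]
  · have hconc := Real.concaveOn_rpow hp0 hp1
    have hmem1 : (1-u) ∈ Set.Ici (0:ℝ) := Set.mem_Ici.2 (by linarith)
    have hmem2 : (1+u) ∈ Set.Ici (0:ℝ) := Set.mem_Ici.2 (by linarith)
    have ha : (0:ℝ) ≤ (u+v)/(2*u) := by positivity
    have hb : (0:ℝ) ≤ (u-v)/(2*u) := by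
      apply div_nonneg (by linarith); linarith
    have hab : (u+v)/(2*u) + (u-v)/(2*u) = 1 := by
      field_simp; ring
    have key1 := hconc.2 hmem1 hmem2 ha hb hab
    have hab' : (u-v)/(2*u) + (u+v)/(2*u) = 1 := by linarith
    have key2 := hconc.2 hmem1 hmem2 hb ha hab'
    simp only [smul_eq_mul] at key1 key2
    have e1 : (u+v)/(2*u) * (1-u) + (u-v)/(2*u) * (1+u) = 1 - v := by
      field_simp; ring
    have e2 : (u-v)/(2*u) * (1-u) + (u+v)/(2*u) * (1+u) = 1 + v := by
      field_simp; ring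
    rw [e1] at key1
    rw [e2] at key2
    have hsum : (u+v)/(2*u) * (1-u)^p + (u-v)/(2*u) * (1+u)^p
        + ((u-v)/(2*u) * (1-u)^p + (u+v)/(2*u) * (1+u)^p) = (1+u)^p + (1-u)^p := by
      field_simp; ring
    linarith


noncomputable def h (ρ z1 z2 : ℝ) : ℝ :=
  (1/2) * (1 + z1 * z2) * g ρ ((z1 + z2)/(1 + z1 * z2))
    + (1/2) * (1 - z1 * z2) * g ρ (|z1 - z2|/(1 - z1 * z2))

lemma aux1 {z1 z2 : ℝ} (h1 : z1 ≤ 1) (h2 : z2 ≤ 1) : z1 + z2 ≤ 1 + z1 * z2 := by nlinarith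

lemma aux2 {z1 z2 : ℝ} (h2l : 0 ≤ z2) (h21 : z2 ≤ z1) (h1u : z1 ≤ 1) :
    (z1 - z2) * (1 + z1 * z2) ≤ (z1 + z2) * (1 - z1 * z2) := by
  nlinarith [mul_nonneg h2l (mul_nonneg (sub_nonneg.2 h1u) (by linarith : (0:ℝ) ≤ 1 + z1))]

set_option maxHeartbeats 1000000 in
lemma main_aux (ρ : ℝ) (hρ : 0 ≤ ρ) (z1 z2 : ℝ) (h2l : 0 ≤ z2) (h21 : z2 ≤ z1)
    (h1u : z1 ≤ 1) (hlt : z1 * z2 < 1) :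
    g ρ z1 * g ρ z2 ≥ g ρ (z1 * z2) * h ρ z1 z2 := by
  have h1l : 0 ≤ z1 := h2l.trans h21
  have h2u : z2 ≤ 1 := h21.trans h1u
  have habs : |z1 - z2| = z1 - z2 := abs_of_nonneg (by linarith)
  simp only [g, h, habs]
  set q : ℝ := 1 + ρ with hqdef
  set p : ℝ := 1/q with hpdef
  set c : ℝ := z1 * z2 with hcdef
  set A : ℝ := 1 + c with hAdef
  set B : ℝ := 1 - c with hBdef
  set u : ℝ := (z1 + z2)/A with hudef
  set v : ℝ := (z1 - z2)/B with hvdef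
  set Su : ℝ := (1/2) * (1+u)^p + (1/2) * (1-u)^p with hSu
  set Sv : ℝ := (1/2) * (1+v)^p + (1/2) * (1-v)^p with hSv
  set S1 : ℝ := (1/2) * (1+z1)^p + (1/2) * (1-z1)^p with hS1
  set S2 : ℝ := (1/2) * (1+z2)^p + (1/2) * (1-z2)^p with hS2
  set Sc : ℝ := (1/2) * (1+c)^p + (1/2) * (1-c)^p with hSc
  set X : ℝ := A * Su^q with hXdef
  set Y : ℝ := B * Sv^q with hYdef
  set M : ℝ := (X + Y)/2 with hMdef
  set x : ℝ := (X - Y)/(X + Y) with hxdef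
  have hc1 : c < 1 := hlt
  have hc0 : 0 ≤ c := by rw [hcdef]; exact mul_nonneg h1l h2l
  clear_value q p c A B u v Su Sv S1 S2 Sc X Y M x
  have hq0 : 0 < q := by rw [hqdef]; linarith
  have hq1 : 1 ≤ q := by rw [hqdef]; linarith
  have hp0 : 0 < p := by rw [hpdef]; exact div_pos one_pos hq0
  have hp1 : p ≤ 1 := by rw [hpdef, div_le_one hq0]; exact hq1
  have hpq : p * q = 1 := by rw [hpdef]; exact one_div_mul_cancel hq0.ne'
  have hA : 0 < A := by rw [hAdef]; linarith
  have hB : 0 < B := by rw [hBdef]; linarith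
  have hu1 : u ≤ 1 := by
    rw [hudef, div_le_one hA, hAdef, hcdef]; exact aux1 h1u h2u
  have hv0 : 0 ≤ v := by
    rw [hvdef]; exact div_nonneg (by linarith) hB.le
  have hvu : v ≤ u := by
    rw [hudef, hvdef, div_le_div_iff₀ hB hA, hAdef, hBdef, hcdef]
    exact aux2 h2l h21 h1u
  have hu0 : 0 ≤ u := hv0.trans hvu
  have hv1 : v ≤ 1 := hvu.trans hu1
  have hzz0 : 0 ≤ z1*z2 := mul_nonneg h1l h2l
  have hzz1 : z1*z2 < 1 := hcdef ▸ hc1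
  have hcne : (1:ℝ) + z1*z2 ≠ 0 := by intro hh; linarith
  have hcne' : (1:ℝ) - z1*z2 ≠ 0 := by intro hh; linarith
  -- product identities
  have hAu1 : A * (1 + u) = (1 + z1) * (1 + z2) := by
    rw [hudef, hAdef, hcdef]; field_simp; ring
  have hAu2 : A * (1 - u) = (1 - z1) * (1 - z2) := by
    rw [hudef, hAdef, hcdef]; field_simp; ring
  have hBv1 : B * (1 + v) = (1 + z1) * (1 - z2) := by
    rw [hvdef, hBdef, hcdef]; field_simp; ring
  have hBv2 : B * (1 - v) = (1 - z1) * (1 + z2) := by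
    rw [hvdef, hBdef, hcdef]; field_simp; ring
  have e1 : A^p * (1+u)^p = (1+z1)^p * (1+z2)^p := by
    rw [← mul_rpow hA.le (by linarith), hAu1, mul_rpow (by linarith) (by linarith)]
  have e2 : A^p * (1-u)^p = (1-z1)^p * (1-z2)^p := by
    rw [← mul_rpow hA.le (by linarith), hAu2, mul_rpow (by linarith) (by linarith)]
  have e3 : B^p * (1+v)^p = (1+z1)^p * (1-z2)^p := by
    rw [← mul_rpow hB.le (by linarith), hBv1, mul_rpow (by linarith) (by linarith)]
  have e4 : B^p * (1-v)^p = (1-z1)^p * (1+z2)^p := by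
    rw [← mul_rpow hB.le (by linarith), hBv2, mul_rpow (by linarith) (by linarith)]
  have hSu0 : 0 < Su := by
    have t1 : 0 < (1+u)^p := rpow_pos_of_pos (by linarith) p
    have t2 : 0 ≤ (1-u)^p := rpow_nonneg (by linarith) p
    rw [hSu]; linarith
  have hSv0 : 0 < Sv := by
    have t1 : 0 < (1+v)^p := rpow_pos_of_pos (by linarith) p
    have t2 : 0 ≤ (1-v)^p := rpow_nonneg (by linarith) p
    rw [hSv]; linarith
  have hS10 : 0 ≤ S1 := by
    have t1 : 0 ≤ (1+z1)^p := rpow_nonneg (by linarith) p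
    have t2 : 0 ≤ (1-z1)^p := rpow_nonneg (by linarith) p
    rw [hS1]; linarith
  have hS20 : 0 ≤ S2 := by
    have t1 : 0 ≤ (1+z2)^p := rpow_nonneg (by linarith) p
    have t2 : 0 ≤ (1-z2)^p := rpow_nonneg (by linarith) p
    rw [hS2]; linarith
  have hSc0 : 0 ≤ Sc := by
    have t1 : 0 ≤ (1+c)^p := rpow_nonneg (by linarith) p
    have t2 : 0 ≤ (1-c)^p := rpow_nonneg (by linarith) p
    rw [hSc]; linarith
  -- main product identity
  have hI : S1 * S2 = (1/2) * (A^p * Su) + (1/2) * (B^p * Sv) := by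
    rw [hS1, hS2, hSu, hSv]
    linear_combination (-(1/4) : ℝ) * e1 - (1/4 : ℝ) * e2 - (1/4 : ℝ) * e3 - (1/4 : ℝ) * e4
  -- ordering: A^p Su ≥ B^p Sv
  have ha1 : (1-z1)^p ≤ (1+z1)^p := rpow_le_rpow (by linarith) (by linarith) hp0.le
  have ha2 : (1-z2)^p ≤ (1+z2)^p := rpow_le_rpow (by linarith) (by linarith) hp0.le
  have hord : B^p * Sv ≤ A^p * Su := by
    have key : A^p * Su - B^p * Sv
        = (1/2) * (((1+z1)^p - (1-z1)^p) * ((1+z2)^p - (1-z2)^p)) := by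
      rw [hSu, hSv]
      linear_combination (1/2 : ℝ) * e1 + (1/2 : ℝ) * e2 - (1/2 : ℝ) * e3 - (1/2 : ℝ) * e4
    linarith [mul_nonneg (sub_nonneg.2 ha1) (sub_nonneg.2 ha2)]
  -- Su ≤ Sv
  have hSuv : Su ≤ Sv := by
    have := phi_anti hp0.le hp1 hv0 hvu hu1
    rw [hSu, hSv]; linarith
  have hApq : (A^p)^q = A := by rw [← Real.rpow_mul hA.le, hpq, rpow_one]
  have hBpq : (B^p)^q = B := by rw [← Real.rpow_mul hB.le, hpq, rpow_one]
  have hY0 : 0 < Y := by rw [hYdef]; exact mul_pos hB (rpow_pos_of_pos hSv0 q)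
  have hXeq : X = (A^p * Su)^q := by
    rw [hXdef, mul_rpow (rpow_nonneg hA.le p) hSu0.le, hApq]
  have hYeq : Y = (B^p * Sv)^q := by
    rw [hYdef, mul_rpow (rpow_nonneg hB.le p) hSv0.le, hBpq]
  have hXY : Y ≤ X := by
    rw [hXeq, hYeq]
    exact rpow_le_rpow (mul_nonneg (rpow_nonneg hB.le p) hSv0.le) hord hq0.le
  have hX0 : 0 < X := hY0.trans_le hXY
  have hXp : X^p = A^p * Su := by
    rw [hXeq, ← Real.rpow_mul (mul_nonneg (rpow_nonneg hA.le p) hSu0.le)]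
    rw [mul_comm q p, hpq, rpow_one]
  have hYp : Y^p = B^p * Sv := by
    rw [hYeq, ← Real.rpow_mul (mul_nonneg (rpow_nonneg hB.le p) hSv0.le)]
    rw [mul_comm q p, hpq, rpow_one]
  have hM0 : 0 < M := by rw [hMdef]; linarith
  have hXYne : X + Y ≠ 0 := ne_of_gt (by linarith)
  have hx0 : 0 ≤ x := by
    rw [hxdef]; exact div_nonneg (by linarith) (by linarith)
  have hxc : x ≤ c := by
    have hBX : B * X ≤ A * Y := by
      rw [hXdef, hYdef]
      linarith [mul_le_mul_of_nonneg_left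
        (rpow_le_rpow hSu0.le hSuv hq0.le) (mul_nonneg hA.le hB.le)]
    rw [hxdef, div_le_iff₀ (by linarith : (0:ℝ) < X + Y)]
    rw [hAdef, hBdef] at hBX
    linarith
  have hXM : X = M * (1 + x) := by
    rw [hMdef, hxdef]; field_simp; ring
  have hYM : Y = M * (1 - x) := by
    rw [hMdef, hxdef]; field_simp; ring
  have hx1 : x ≤ 1 := hxc.trans hc1.le
  -- power mean comparison
  have hphi : (1+c)^p + (1-c)^p ≤ (1+x)^p + (1-x)^p :=
    phi_anti hp0.le hp1 hx0 hxc hc1.le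
  have hmid : M^p * ((1+c)^p + (1-c)^p) ≤ X^p + Y^p := by
    have hXpm : X^p = M^p * (1+x)^p := by
      rw [hXM, mul_rpow hM0.le (by linarith)]
    have hYpm : Y^p = M^p * (1-x)^p := by
      rw [hYM, mul_rpow hM0.le (by linarith)]
    rw [hXpm, hYpm, ← mul_add]
    exact mul_le_mul_of_nonneg_left hphi (rpow_nonneg hM0.le p)
  -- assemble
  rw [ge_iff_le]
  have hgoalL : S1^q * S2^q = ((X^p + Y^p)/2)^q := by
    rw [← mul_rpow hS10 hS20, hI, ← hXp, ← hYp]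
    congr 1; ring
  have hgoalR : Sc^q * ((1/2) * A * Su^q + (1/2) * B * Sv^q) = Sc^q * M := by
    rw [hMdef, hXdef, hYdef]; ring
  have hmono : (M^p * Sc)^q ≤ ((X^p + Y^p)/2)^q := by
    apply rpow_le_rpow (mul_nonneg (rpow_nonneg hM0.le p) hSc0) _ hq0.le
    have hexp : M^p * Sc = M^p * ((1+c)^p + (1-c)^p) / 2 := by rw [hSc]; ring
    rw [hexp]; linarith
  have hfin : (M^p * Sc)^q = Sc^q * M := by
    rw [mul_rpow (rpow_nonneg hM0.le p) hSc0]
    rw [← Real.rpow_mul hM0.le, hpq, rpow_one, mul_comm]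
  calc Sc^q * ((1/2) * A * Su^q + (1/2) * B * Sv^q) = Sc^q * M := hgoalR
    _ = (M^p * Sc)^q := hfin.symm
    _ ≤ ((X^p + Y^p)/2)^q := hmono
    _ = S1^q * S2^q := hgoalL.symm

theorem pointwise_ineq (ρ : ℝ) (hρ : 0 ≤ ρ) (z1 z2 : ℝ)
    (h1 : z1 ∈ Set.Icc (0:ℝ) 1) (h2 : z2 ∈ Set.Icc (0:ℝ) 1) (hlt : z1 * z2 < 1) :
    g ρ z1 * g ρ z2 ≥ g ρ (z1 * z2) * h ρ z1 z2 := by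
  obtain ⟨h1l, h1u⟩ := h1
  obtain ⟨h2l, h2u⟩ := h2
  have hsymm : h ρ z1 z2 = h ρ z2 z1 := by
    simp only [h, mul_comm z2 z1, abs_sub_comm z1 z2, add_comm z2 z1]
  rcases le_total z2 z1 with hle | hle
  · exact main_aux ρ hρ z1 z2 h2l hle h1u hlt
  · rw [mul_comm (g ρ z1), mul_comm z1 z2, hsymm]
    exact main_aux ρ hρ z2 z1 h1l hle h2u (by rwa [mul_comm])
end

section
/- Let Z1, Z2 be independent identically distributed random variables with values in [0,1]. For ρ ≥ 0, E[g(ρ,Z1)]·E[g(ρ,Z2)] ≥ E[g(ρ, Z1·Z2)]·E[h(ρ, Z1, Z2)], i.e., E0(ρ, W⁻) + E0(ρ, W⁺) ≥ 2·E0(ρ, W) after taking -log. (Submartingale property of Gallager's E0 under polarization, expressed via the g and h functionals.) -/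
/-!
Put `α = 1/(1+ρ)` and `M(p, q) = ((p^α + q^α)/2)^(1/α)` (`powMean`), so `g(z) = M(1+z, 1-z)`.
As `α ≤ 1`, `M` is concave and it is symmetric, which makes `g` and `h` antitone in each
argument on `[0,1]`.

Pointwise, with `u = z₁z₂`, `X = (1+u) g((z₁+z₂)/(1+u))` and `Y = (1-u) g(|z₁-z₂|/(1-u))` we have
`h = (X+Y)/2`, and the identity `M(p,q) M(r,s) = M(M(pr,qs), M(ps,qr))` gives
`g(z₁) g(z₂) = M(X, Y) = (X+Y)/2 · g(|X-Y|/(X+Y))`. Since `g` is antitone while `g(z)/(1-z²)` is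
nondecreasing, `|X-Y| ≤ u (X+Y)`, hence `g(z₁) g(z₂) ≥ g(u) h(z₁, z₂)`.

Taking expectations, independence turns the left side into `E[g(Z₁) g(Z₂)] ≥ E[g(Z₁Z₂) h(Z₁,Z₂)]`,
and the Harris inequality for the coordinatewise antitone functions `g(z₁z₂)` and `h(z₁,z₂)` of
independent variables bounds this from below by `E[g(Z₁Z₂)] E[h(Z₁,Z₂)]`.
-/

open Real MeasureTheory

open Set ProbabilityTheory

noncomputable def powMean (ρ p q : ℝ) : ℝ :=
  ((1/2) * p ^ (1/(1+ρ)) + (1/2) * q ^ (1/(1+ρ))) ^ (1+ρ)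

lemma g_eq_powMean (ρ z : ℝ) : g ρ z = powMean ρ (1 + z) (1 - z) := rfl

lemma powMean_comm (ρ p q : ℝ) : powMean ρ p q = powMean ρ q p := by
  rw [powMean, powMean, add_comm]

lemma powMean_nonneg {ρ p q : ℝ} (hp : 0 ≤ p) (hq : 0 ≤ q) : 0 ≤ powMean ρ p q := by
  unfold powMean; positivity

lemma g_zero (ρ : ℝ) : g ρ 0 = 1 := by
  norm_num [g]

lemma measurable_g (ρ : ℝ) : Measurable (g ρ) := by
  unfold g; fun_prop

theorem ConcaveOn.antitoneOn_Icc_of_even {f : ℝ → ℝ} {a : ℝ} (hf : ConcaveOn ℝ (Icc (-a) a) f)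
    (heven : f.Even) : AntitoneOn f (Icc 0 a) := by
  intro y hy x hx hyx
  obtain ⟨hx₀, hxa⟩ := hx
  have := hf.min_le_of_mem_Icc (x := -x) (y := x) ⟨by linarith, by linarith⟩ ⟨by linarith, hxa⟩
    ⟨by linarith [hy.1], hyx⟩
  rwa [heven, min_self] at this

lemma inv_add_inv_le_inv_add_inv {a a' b b' : ℝ} (ha : a' ≤ a) (ha' : 1 ≤ a') (hb : 0 < b)
    (hbb' : b ≤ b') (hb' : b' ≤ 1) (hsum : a + b ≤ a' + b') : a'⁻¹ + b'⁻¹ ≤ a⁻¹ + b⁻¹ := by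
  have hA : a'⁻¹ - a⁻¹ ≤ a - a' := by
    rw [inv_sub_inv (by positivity) (by linarith)]
    exact div_le_self (by linarith) (by nlinarith)
  have hB : b' - b ≤ b⁻¹ - b'⁻¹ := by
    rw [inv_sub_inv hb.ne' (by linarith)]
    exact le_div_self (by linarith) (by nlinarith) (by nlinarith)
  linarith

section PowMean

variable {ρ p q : ℝ} (hρ : 0 ≤ ρ)
include hρ

lemma powMean_rpow (hp : 0 ≤ p) (hq : 0 ≤ q) :
    powMean ρ p q ^ (1/(1+ρ)) = 1/2 * p ^ (1/(1+ρ)) + 1/2 * q ^ (1/(1+ρ)) := by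
  rw [powMean, ← rpow_mul (by positivity), mul_one_div_cancel (by positivity), rpow_one]

lemma powMean_le_powMean {p' q' : ℝ} (hp : 0 ≤ p) (hq : 0 ≤ q) (hpp' : p ≤ p') (hqq' : q ≤ q') :
    powMean ρ p q ≤ powMean ρ p' q' := by
  unfold powMean; gcongr

lemma powMean_mul {t : ℝ} (ht : 0 ≤ t) (hp : 0 ≤ p) (hq : 0 ≤ q) :
    powMean ρ (t * p) (t * q) = t * powMean ρ p q := by
  rw [powMean, powMean, mul_rpow ht hp, mul_rpow ht hq,
    show ∀ a b c : ℝ, 1/2 * (a * b) + 1/2 * (a * c) = a * (1/2 * b + 1/2 * c) by intros; ring,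
    mul_rpow (by positivity) (by positivity), ← rpow_mul ht, one_div_mul_cancel (by positivity),
    rpow_one]

lemma powMean_zero_zero : powMean ρ 0 0 = 0 := by
  simpa using powMean_mul hρ (le_refl 0) zero_le_one zero_le_one (ρ := ρ)

lemma one_le_powMean_of_mix {p₁ q₁ p₂ q₂ l : ℝ} (hp₁ : 0 ≤ p₁) (hq₁ : 0 ≤ q₁) (hp₂ : 0 ≤ p₂)
    (hq₂ : 0 ≤ q₂) (h₁ : powMean ρ p₁ q₁ = 1) (h₂ : powMean ρ p₂ q₂ = 1) (hl₀ : 0 ≤ l)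
    (hl₁ : l ≤ 1) :
    1 ≤ powMean ρ (l * p₁ + (1 - l) * p₂) (l * q₁ + (1 - l) * q₂) := by
  have hα := concaveOn_rpow (p := 1/(1+ρ)) (by positivity)
    ((div_le_one (by positivity)).2 (by linarith))
  have hp := hα.2 (mem_Ici.2 hp₁) (mem_Ici.2 hp₂) hl₀ (sub_nonneg.2 hl₁) (add_sub_cancel l 1)
  have hq := hα.2 (mem_Ici.2 hq₁) (mem_Ici.2 hq₂) hl₀ (sub_nonneg.2 hl₁) (add_sub_cancel l 1)
  simp only [smul_eq_mul] at hp hq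
  have hsum : l * (1/2 * p₁ ^ (1/(1+ρ)) + 1/2 * q₁ ^ (1/(1+ρ)))
      + (1 - l) * (1/2 * p₂ ^ (1/(1+ρ)) + 1/2 * q₂ ^ (1/(1+ρ))) = 1 := by
    rw [← powMean_rpow hρ hp₁ hq₁, ← powMean_rpow hρ hp₂ hq₂, h₁, h₂, one_rpow]; ring
  exact one_le_rpow (by linarith) (by positivity)

lemma powMean_add_powMean_le {p₁ q₁ p₂ q₂ : ℝ} (hp₁ : 0 ≤ p₁) (hq₁ : 0 ≤ q₁) (hp₂ : 0 ≤ p₂)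
    (hq₂ : 0 ≤ q₂) :
    powMean ρ p₁ q₁ + powMean ρ p₂ q₂ ≤ powMean ρ (p₁ + p₂) (q₁ + q₂) := by
  rcases (powMean_nonneg hp₁ hq₁ (ρ := ρ)).eq_or_lt with hs | hs
  · rw [← hs, zero_add]
    exact powMean_le_powMean hρ hp₂ hq₂ (by linarith) (by linarith)
  rcases (powMean_nonneg hp₂ hq₂ (ρ := ρ)).eq_or_lt with ht | ht
  · rw [← ht, add_zero]
    exact powMean_le_powMean hρ hp₁ hq₁ (by linarith) (by linarith)
  generalize hs_def : powMean ρ p₁ q₁ = s at hs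
  generalize ht_def : powMean ρ p₂ q₂ = t at ht
  -- normalize both points to have mean `1`, then use concavity at the weight `s / (s + t)`
  have unit : ∀ {P Q r : ℝ}, 0 ≤ P → 0 ≤ Q → 0 < r → powMean ρ P Q = r →
      powMean ρ (P / r) (Q / r) = 1 := by
    intro P Q r hP hQ hr hPQ
    rw [div_eq_inv_mul, div_eq_inv_mul, powMean_mul hρ (by positivity) hP hQ, hPQ,
      inv_mul_cancel₀ hr.ne']
  have hl : s / (s + t) ≤ 1 := div_le_one_of_le₀ (by linarith) (by positivity)
  have key := one_le_powMean_of_mix hρ (l := s / (s + t)) (by positivity) (by positivity)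
    (by positivity) (by positivity) (unit hp₁ hq₁ hs hs_def) (unit hp₂ hq₂ ht ht_def)
    (by positivity) hl
  have hmix : ∀ P Q : ℝ,
      P + Q = (s + t) * (s / (s + t) * (P / s) + (1 - s / (s + t)) * (Q / t)) := by
    intro P Q; field_simp; ring
  have hmix_nonneg : ∀ P Q : ℝ, 0 ≤ P → 0 ≤ Q →
      0 ≤ s / (s + t) * (P / s) + (1 - s / (s + t)) * (Q / t) := by
    intro P Q hP hQ
    have : 0 ≤ 1 - s / (s + t) := sub_nonneg.2 hl
    positivity
  rw [hmix p₁ p₂, hmix q₁ q₂, powMean_mul hρ (by positivity) (hmix_nonneg _ _ hp₁ hp₂)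
    (hmix_nonneg _ _ hq₁ hq₂)]
  exact le_mul_of_one_le_right (by positivity) key

theorem concaveOn_powMean : ConcaveOn ℝ (Ici 0 ×ˢ Ici 0) fun v : ℝ × ℝ ↦ powMean ρ v.1 v.2 := by
  refine ⟨(convex_Ici 0).prod (convex_Ici 0), fun v hv w hw a b ha hb _ ↦ ?_⟩
  simp only [Prod.fst_add, Prod.snd_add, Prod.smul_fst, Prod.smul_snd, smul_eq_mul]
  rw [← powMean_mul hρ ha hv.1 hv.2, ← powMean_mul hρ hb hw.1 hw.2]
  exact powMean_add_powMean_le hρ (mul_nonneg ha hv.1) (mul_nonneg ha hv.2)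
    (mul_nonneg hb hw.1) (mul_nonneg hb hw.2)

lemma concaveOn_powMean_one_add_one_sub {a b : ℝ} (ha : 0 ≤ a) (hb : 0 ≤ b) :
    ConcaveOn ℝ (Icc (-1) 1) fun x ↦ powMean ρ (a * (1 + x)) (b * (1 - x)) := by
  refine ⟨convex_Icc _ _, fun x hx y hy s t hs ht hst ↦ ?_⟩
  have hmem : ∀ z ∈ Icc (-1 : ℝ) 1, (a * (1 + z), b * (1 - z)) ∈ Ici (0 : ℝ) ×ˢ Ici 0 :=
    fun z hz ↦ ⟨mul_nonneg ha (by linarith [hz.1]), mul_nonneg hb (by linarith [hz.2])⟩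
  have := (concaveOn_powMean hρ).2 (hmem x hx) (hmem y hy) hs ht hst
  simp only [Prod.fst_add, Prod.snd_add, Prod.smul_fst, Prod.smul_snd, smul_eq_mul] at this ⊢
  convert this using 2
  · linear_combination -a * hst
  · linear_combination -b * hst

theorem antitoneOn_powMean_add_powMean {a b : ℝ} (ha : 0 ≤ a) (hb : 0 ≤ b) :
    AntitoneOn (fun x ↦ powMean ρ (a * (1 + x)) (b * (1 - x))
      + powMean ρ (b * (1 + x)) (a * (1 - x))) (Icc 0 1) := by
  refine ConcaveOn.antitoneOn_Icc_of_even ?_ fun x ↦ ?_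
  · exact (concaveOn_powMean_one_add_one_sub hρ ha hb).add
      (concaveOn_powMean_one_add_one_sub hρ hb ha)
  · simp only [sub_neg_eq_add, ← sub_eq_add_neg]
    rw [add_comm]
    congr 1 <;> exact powMean_comm _ _ _

theorem antitoneOn_g : AntitoneOn (g ρ) (Icc 0 1) := by
  intro y hy x hx hyx
  have := antitoneOn_powMean_add_powMean hρ zero_le_one zero_le_one hy hx hyx
  simp only [one_mul] at this
  rw [g_eq_powMean, g_eq_powMean]
  linarith

lemma g_mem_Icc {z : ℝ} (hz : z ∈ Icc (0 : ℝ) 1) : g ρ z ∈ Icc (0 : ℝ) 1 :=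
  ⟨powMean_nonneg (by linarith [hz.1]) (by linarith [hz.2]),
    g_zero ρ ▸ antitoneOn_g hρ ⟨le_rfl, zero_le_one⟩ hz hz.1⟩

lemma powMean_eq_mul_g (hp : 0 ≤ p) (hq : 0 ≤ q) :
    powMean ρ p q = (p + q) / 2 * g ρ (|p - q| / (p + q)) := by
  wlog hqp : q ≤ p generalizing p q
  · rw [powMean_comm, this hq hp (le_of_not_ge hqp), add_comm, abs_sub_comm]
  rcases (add_nonneg hp hq).eq_or_lt with hpq | hpq
  · obtain ⟨rfl, rfl⟩ : p = 0 ∧ q = 0 := ⟨by linarith, by linarith⟩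
    simp [powMean_zero_zero hρ]
  have hw₀ : 0 ≤ (p - q) / (p + q) := div_nonneg (sub_nonneg.2 hqp) hpq.le
  have hw₁ : (p - q) / (p + q) ≤ 1 := div_le_one_of_le₀ (by linarith) hpq.le
  rw [g_eq_powMean, abs_of_nonneg (sub_nonneg.2 hqp),
    ← powMean_mul hρ (by positivity) (by linarith) (by linarith)]
  congr 1 <;> field_simp <;> ring

lemma powMean_mul_powMean {r s : ℝ} (hp : 0 ≤ p) (hq : 0 ≤ q) (hr : 0 ≤ r) (hs : 0 ≤ s) :
    powMean ρ p q * powMean ρ r s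
      = powMean ρ (powMean ρ (p * r) (q * s)) (powMean ρ (p * s) (q * r)) := by
  rw [powMean, powMean, ← mul_rpow (by positivity) (by positivity), powMean,
    powMean_rpow hρ (by positivity) (by positivity),
    powMean_rpow hρ (by positivity) (by positivity),
    mul_rpow hp hr, mul_rpow hq hs, mul_rpow hp hs, mul_rpow hq hr]
  ring_nf

lemma g_eq_one_sub_sq_mul_powMean {z : ℝ} (hz : z ∈ Ioo (-1 : ℝ) 1) :
    g ρ z = (1 - z ^ 2) * powMean ρ (1 - z)⁻¹ (1 + z)⁻¹ := by
  obtain ⟨hz₁, hz₂⟩ := hz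
  have h₁ : 1 - z ≠ 0 := by linarith
  have h₂ : 1 + z ≠ 0 := by linarith
  rw [g_eq_powMean, ← powMean_mul hρ (by nlinarith) (inv_nonneg.2 (by linarith))
    (inv_nonneg.2 (by linarith))]
  congr 1 <;> field_simp <;> ring

lemma monotoneOn_powMean_inv :
    MonotoneOn (fun z ↦ powMean ρ (1 - z)⁻¹ (1 + z)⁻¹) (Ico 0 1) := by
  rintro y ⟨hy₀, hy₁⟩ x ⟨hx₀, hx₁⟩ hyx
  set α := 1 / (1 + ρ) with hα_def
  have hα : 0 < α := by positivity
  have hsum : (1 + x) ^ α + (1 - x) ^ α ≤ (1 + y) ^ α + (1 - y) ^ α := by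
    have hg := antitoneOn_g hρ ⟨hy₀, hy₁.le⟩ ⟨hx₀, hx₁.le⟩ hyx
    have := rpow_nonneg (by linarith : 0 ≤ 1 - x) α
    have := rpow_nonneg (by linarith : 0 ≤ 1 - y) α
    rw [g, g, rpow_le_rpow_iff (by positivity) (by positivity) (by positivity)] at hg
    linarith
  have key := inv_add_inv_le_inv_add_inv
    (rpow_le_rpow (by linarith) (by linarith : 1 + y ≤ 1 + x) hα.le)
    (one_le_rpow (by linarith) hα.le) (rpow_pos_of_pos (by linarith : 0 < 1 - x) α)
    (rpow_le_rpow (by linarith) (by linarith : 1 - x ≤ 1 - y) hα.le)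
    (rpow_le_one (by linarith) (by linarith) hα.le) hsum
  have := rpow_nonneg (by linarith : 0 ≤ 1 - y) α
  have := rpow_nonneg (by linarith : 0 ≤ 1 + y) α
  simp only [powMean, ← hα_def]
  rw [inv_rpow (by linarith), inv_rpow (by linarith), inv_rpow (by linarith),
    inv_rpow (by linarith)]
  exact rpow_le_rpow (by positivity) (by linarith) (by positivity)

lemma mul_g_le_mul_g_of_mul_one_sub_sq_eq {c d x y : ℝ} (hd : 0 ≤ d) (hdc : d ≤ c) (hy : 0 ≤ y)
    (hyx : y ≤ x) (hx : x ≤ 1) (h : c * (1 - x ^ 2) = d * (1 - y ^ 2)) :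
    d * g ρ y ≤ c * g ρ x := by
  rcases hx.lt_or_eq with hx | rfl
  · have hk := monotoneOn_powMean_inv hρ ⟨hy, hyx.trans_lt hx⟩ ⟨hy.trans hyx, hx⟩ hyx
    rw [g_eq_one_sub_sq_mul_powMean hρ ⟨by linarith, by linarith⟩,
      g_eq_one_sub_sq_mul_powMean hρ ⟨by linarith, hx⟩, ← mul_assoc, ← mul_assoc, ← h]
    exact mul_le_mul_of_nonneg_left hk (mul_nonneg (by linarith) (by nlinarith))
  · have hg := (g_mem_Icc hρ ⟨zero_le_one, le_rfl⟩).1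
    rcases mul_eq_zero.1 (h.symm.trans (by ring)) with rfl | hy₁
    · simpa using mul_nonneg (hd.trans hdc) hg
    · obtain rfl : y = 1 := by nlinarith
      exact mul_le_mul_of_nonneg_right hdc hg

end PowMean

section Pointwise

variable {ρ z₁ z₂ : ℝ}

lemma div_one_add_mul_mem_Icc (hz₁ : z₁ ∈ Icc (0 : ℝ) 1) (hz₂ : z₂ ∈ Icc (0 : ℝ) 1) :
    (z₁ + z₂) / (1 + z₁ * z₂) ∈ Icc (0 : ℝ) 1 := by
  obtain ⟨h₁, h₁'⟩ := hz₁
  obtain ⟨h₂, h₂'⟩ := hz₂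
  exact ⟨by positivity, div_le_one_of_le₀ (by nlinarith) (by positivity)⟩

lemma abs_sub_div_one_sub_mul_mem_Icc (hz₁ : z₁ ∈ Icc (0 : ℝ) 1) (hz₂ : z₂ ∈ Icc (0 : ℝ) 1) :
    |z₁ - z₂| / (1 - z₁ * z₂) ∈ Icc (0 : ℝ) 1 := by
  obtain ⟨h₁, h₁'⟩ := hz₁
  obtain ⟨h₂, h₂'⟩ := hz₂
  exact ⟨div_nonneg (abs_nonneg _) (by nlinarith),
    div_le_one_of_le₀ (abs_le.2 ⟨by nlinarith, by nlinarith⟩) (by nlinarith)⟩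

lemma abs_sub_mul_le_add_mul (hz₁ : z₁ ∈ Icc (0 : ℝ) 1) (hz₂ : z₂ ∈ Icc (0 : ℝ) 1) :
    |z₁ - z₂| * (1 + z₁ * z₂) ≤ (z₁ + z₂) * (1 - z₁ * z₂) := by
  obtain ⟨h₁, h₁'⟩ := hz₁
  obtain ⟨h₂, h₂'⟩ := hz₂
  rcases le_total z₂ z₁ with h | h
  · rw [abs_of_nonneg (sub_nonneg.2 h)]
    nlinarith [mul_nonneg (mul_nonneg h₂ (sub_nonneg.2 h₁')) (by linarith : 0 ≤ 1 + z₁)]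
  · rw [abs_of_nonpos (sub_nonpos.2 h)]
    nlinarith [mul_nonneg (mul_nonneg h₁ (sub_nonneg.2 h₂')) (by linarith : 0 ≤ 1 + z₂)]

lemma h_comm (ρ z₁ z₂ : ℝ) : h ρ z₁ z₂ = h ρ z₂ z₁ := by
  rw [h, h, add_comm z₁, mul_comm z₁, abs_sub_comm]

lemma measurable_h (ρ : ℝ) : Measurable fun p : ℝ × ℝ ↦ h ρ p.1 p.2 := by
  have := measurable_g ρ
  unfold h
  fun_prop

variable (hρ : 0 ≤ ρ)
include hρ

lemma powMean_one_add_mul_one_add (hz₁ : z₁ ∈ Icc (0 : ℝ) 1) (hz₂ : z₂ ∈ Icc (0 : ℝ) 1) :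
    powMean ρ ((1 + z₁) * (1 + z₂)) ((1 - z₁) * (1 - z₂))
      = (1 + z₁ * z₂) * g ρ ((z₁ + z₂) / (1 + z₁ * z₂)) := by
  obtain ⟨h₁, h₁'⟩ := hz₁
  obtain ⟨h₂, h₂'⟩ := hz₂
  rw [powMean_eq_mul_g hρ (by positivity) (by nlinarith),
    show (1 + z₁) * (1 + z₂) + (1 - z₁) * (1 - z₂) = 2 * (1 + z₁ * z₂) by ring,
    show (1 + z₁) * (1 + z₂) - (1 - z₁) * (1 - z₂) = 2 * (z₁ + z₂) by ring,
    abs_of_nonneg (by positivity), mul_div_mul_left _ _ two_ne_zero]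
  ring

lemma powMean_one_add_mul_one_sub (hz₁ : z₁ ∈ Icc (0 : ℝ) 1) (hz₂ : z₂ ∈ Icc (0 : ℝ) 1) :
    powMean ρ ((1 + z₁) * (1 - z₂)) ((1 - z₁) * (1 + z₂))
      = (1 - z₁ * z₂) * g ρ (|z₁ - z₂| / (1 - z₁ * z₂)) := by
  obtain ⟨h₁, h₁'⟩ := hz₁
  obtain ⟨h₂, h₂'⟩ := hz₂
  rw [powMean_eq_mul_g hρ (by nlinarith) (by nlinarith),
    show (1 + z₁) * (1 - z₂) + (1 - z₁) * (1 + z₂) = 2 * (1 - z₁ * z₂) by ring,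
    show (1 + z₁) * (1 - z₂) - (1 - z₁) * (1 + z₂) = 2 * (z₁ - z₂) by ring,
    abs_mul, abs_two, mul_div_mul_left _ _ two_ne_zero]
  ring

lemma h_eq_powMean (hz₁ : z₁ ∈ Icc (0 : ℝ) 1) (hz₂ : z₂ ∈ Icc (0 : ℝ) 1) :
    h ρ z₁ z₂ = 1 / 2 * powMean ρ ((1 + z₁) * (1 + z₂)) ((1 - z₁) * (1 - z₂))
      + 1 / 2 * powMean ρ ((1 + z₁) * (1 - z₂)) ((1 - z₁) * (1 + z₂)) := by
  rw [powMean_one_add_mul_one_add hρ hz₁ hz₂, powMean_one_add_mul_one_sub hρ hz₁ hz₂, h]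
  ring

lemma h_mem_Icc (hz₁ : z₁ ∈ Icc (0 : ℝ) 1) (hz₂ : z₂ ∈ Icc (0 : ℝ) 1) :
    h ρ z₁ z₂ ∈ Icc (0 : ℝ) 1 := by
  obtain ⟨hx₀, hx₁⟩ := g_mem_Icc hρ (div_one_add_mul_mem_Icc hz₁ hz₂)
  obtain ⟨hy₀, hy₁⟩ := g_mem_Icc hρ (abs_sub_div_one_sub_mul_mem_Icc hz₁ hz₂)
  have hu := unitInterval.mul_mem hz₁ hz₂
  obtain ⟨hu₀, hu₁⟩ := hu
  unfold h
  constructor <;> nlinarith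

lemma antitoneOn_h_left (hz₂ : z₂ ∈ Icc (0 : ℝ) 1) : AntitoneOn (h ρ · z₂) (Icc 0 1) := by
  intro y hy x hx hyx
  have := antitoneOn_powMean_add_powMean hρ (a := 1 + z₂) (b := 1 - z₂) (by linarith [hz₂.1])
    (by linarith [hz₂.2]) hy hx hyx
  simp only [mul_comm (1 + z₂), mul_comm (1 - z₂)] at this
  show h ρ x z₂ ≤ h ρ y z₂
  rw [h_eq_powMean hρ hy hz₂, h_eq_powMean hρ hx hz₂]
  linarith

theorem antitoneOn_h : AntitoneOn (fun p : ℝ × ℝ ↦ h ρ p.1 p.2) (Icc 0 1 ×ˢ Icc 0 1) := by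
  rintro ⟨y₁, y₂⟩ ⟨hy₁, hy₂⟩ ⟨x₁, x₂⟩ ⟨hx₁, hx₂⟩ ⟨h₁, h₂⟩
  calc h ρ x₁ x₂ ≤ h ρ y₁ x₂ := antitoneOn_h_left hρ hx₂ hy₁ hx₁ h₁
    _ = h ρ x₂ y₁ := h_comm ..
    _ ≤ h ρ y₂ y₁ := antitoneOn_h_left hρ hy₁ hy₂ hx₂ h₂
    _ = h ρ y₁ y₂ := h_comm ..

theorem antitoneOn_g_mul : AntitoneOn (fun p : ℝ × ℝ ↦ g ρ (p.1 * p.2)) (Icc 0 1 ×ˢ Icc 0 1) := by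
  rintro ⟨y₁, y₂⟩ ⟨hy₁, hy₂⟩ ⟨x₁, x₂⟩ ⟨hx₁, hx₂⟩ ⟨h₁, h₂⟩
  exact antitoneOn_g hρ (unitInterval.mul_mem hy₁ hy₂) (unitInterval.mul_mem hx₁ hx₂)
    (mul_le_mul h₁ h₂ hy₂.1 hx₁.1)

lemma g_mul_g_eq_powMean (hz₁ : z₁ ∈ Icc (0 : ℝ) 1) (hz₂ : z₂ ∈ Icc (0 : ℝ) 1) :
    g ρ z₁ * g ρ z₂ = powMean ρ ((1 + z₁ * z₂) * g ρ ((z₁ + z₂) / (1 + z₁ * z₂)))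
      ((1 - z₁ * z₂) * g ρ (|z₁ - z₂| / (1 - z₁ * z₂))) := by
  obtain ⟨h₁, h₁'⟩ := id hz₁
  obtain ⟨h₂, h₂'⟩ := id hz₂
  rw [g_eq_powMean, g_eq_powMean, powMean_mul_powMean hρ (by linarith) (by linarith)
    (by linarith) (by linarith), powMean_one_add_mul_one_add hρ hz₁ hz₂,
    powMean_one_add_mul_one_sub hρ hz₁ hz₂]

lemma abs_sub_le_mul_add (hz₁ : z₁ ∈ Icc (0 : ℝ) 1) (hz₂ : z₂ ∈ Icc (0 : ℝ) 1) :
    |(1 + z₁ * z₂) * g ρ ((z₁ + z₂) / (1 + z₁ * z₂))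
        - (1 - z₁ * z₂) * g ρ (|z₁ - z₂| / (1 - z₁ * z₂))|
      ≤ z₁ * z₂ * ((1 + z₁ * z₂) * g ρ ((z₁ + z₂) / (1 + z₁ * z₂))
        + (1 - z₁ * z₂) * g ρ (|z₁ - z₂| / (1 - z₁ * z₂))) := by
  have hx := div_one_add_mul_mem_Icc hz₁ hz₂
  have hy := abs_sub_div_one_sub_mul_mem_Icc hz₁ hz₂
  have hgx := (g_mem_Icc hρ hx).1
  have hgy := (g_mem_Icc hρ hy).1
  obtain ⟨hu₀, hu₁⟩ := unitInterval.mul_mem hz₁ hz₂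
  rcases hu₁.lt_or_eq with hu₁ | hu₁
  swap
  · simp only [hu₁, sub_self, zero_mul, sub_zero, add_zero, one_mul] at hgx ⊢
    exact (abs_of_nonneg (by linarith)).le
  have hyx : |z₁ - z₂| / (1 - z₁ * z₂) ≤ (z₁ + z₂) / (1 + z₁ * z₂) := by
    rw [div_le_div_iff₀ (by linarith) (by linarith)]
    exact abs_sub_mul_le_add_mul hz₁ hz₂
  have hdec := antitoneOn_g hρ hy hx hyx
  -- with `u = z₁ z₂` and `x`, `y` the arguments of `g` above,
  -- `(1+u)²(1-x²) = (1-z₁²)(1-z₂²) = (1-u)²(1-y²)`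
  have hratio := mul_g_le_mul_g_of_mul_one_sub_sq_eq hρ (c := (1 + z₁ * z₂) ^ 2)
    (sq_nonneg (1 - z₁ * z₂)) (by nlinarith) hy.1 hyx hx.2 (h := by
      have : 1 - z₁ * z₂ ≠ 0 := by linarith
      have : 1 + z₁ * z₂ ≠ 0 := by linarith
      rw [div_pow, div_pow, sq_abs]
      field_simp
      ring)
  rw [abs_le]
  constructor
  · nlinarith
  · nlinarith [mul_le_mul_of_nonneg_left hdec (by nlinarith : 0 ≤ 1 - (z₁ * z₂) ^ 2)]

theorem g_mul_mul_h_le_g_mul_g (hz₁ : z₁ ∈ Icc (0 : ℝ) 1) (hz₂ : z₂ ∈ Icc (0 : ℝ) 1) :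
    g ρ (z₁ * z₂) * h ρ z₁ z₂ ≤ g ρ z₁ * g ρ z₂ := by
  have hu := unitInterval.mul_mem hz₁ hz₂
  have hbound := abs_sub_le_mul_add hρ hz₁ hz₂
  have hX := mul_nonneg (by linarith [hu.1] : 0 ≤ 1 + z₁ * z₂)
    (g_mem_Icc hρ (div_one_add_mul_mem_Icc hz₁ hz₂)).1
  have hY := mul_nonneg (by linarith [hu.2] : 0 ≤ 1 - z₁ * z₂)
    (g_mem_Icc hρ (abs_sub_div_one_sub_mul_mem_Icc hz₁ hz₂)).1
  rw [g_mul_g_eq_powMean hρ hz₁ hz₂, h, mul_assoc (1 / 2 : ℝ), mul_assoc (1 / 2 : ℝ)]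
  generalize (1 + z₁ * z₂) * g ρ ((z₁ + z₂) / (1 + z₁ * z₂)) = X at hX hbound ⊢
  generalize (1 - z₁ * z₂) * g ρ (|z₁ - z₂| / (1 - z₁ * z₂)) = Y at hY hbound ⊢
  have hw : |X - Y| / (X + Y) ≤ z₁ * z₂ := div_le_of_le_mul₀ (by positivity) hu.1 hbound
  rw [powMean_eq_mul_g hρ hX hY]
  calc g ρ (z₁ * z₂) * (1 / 2 * X + 1 / 2 * Y) = (X + Y) / 2 * g ρ (z₁ * z₂) := by ring
    _ ≤ (X + Y) / 2 * g ρ (|X - Y| / (X + Y)) := mul_le_mul_of_nonneg_left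
        (antitoneOn_g hρ ⟨by positivity, hw.trans hu.2⟩ hu hw) (by positivity)

end Pointwise

section Correlation

variable {α β Ω : Type*} [MeasurableSpace α] [MeasurableSpace β] [MeasurableSpace Ω]

theorem integral_mul_integral_le_integral_mul_of_monovaryOn {μ : Measure α}
    [IsProbabilityMeasure μ] {s : Set α} {f g : α → ℝ} (hs : ∀ᵐ x ∂μ, x ∈ s)
    (hfg : MonovaryOn f g s) (hf : Integrable f μ) (hg : Integrable g μ)
    (hfg' : Integrable (fun x ↦ f x * g x) μ) :
    (∫ x, f x ∂μ) * (∫ x, g x ∂μ) ≤ ∫ x, f x * g x ∂μ := by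
  have hss : ∀ᵐ p ∂μ.prod μ, p.1 ∈ s ∧ p.2 ∈ s :=
    (Measure.quasiMeasurePreserving_fst.ae hs).and (Measure.quasiMeasurePreserving_snd.ae hs)
  have key := integral_mono_ae ((hf.mul_prod hg).add (hg.mul_prod hf))
    ((hfg'.comp_fst μ).add (hfg'.comp_snd μ)) (hss.mono fun p hp ↦ by
      have := monovaryOn_iff_mul_rearrangement.1 hfg hp.1 hp.2
      simp only [Pi.add_apply]
      linarith [mul_comm (f p.2) (g p.1)])
  simp only [Pi.add_apply] at key
  rw [integral_add (hf.mul_prod hg) (hg.mul_prod hf),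
    integral_add (hfg'.comp_fst μ) (hfg'.comp_snd μ), integral_prod_mul, integral_prod_mul,
    integral_fun_fst (fun x ↦ f x * g x), integral_fun_snd (fun x ↦ f x * g x)] at key
  simp only [probReal_univ, one_smul] at key
  linarith

section Marginal

variable {ν : Measure β} [IsProbabilityMeasure ν] {s : Set α} {t : Set β} {H : α × β → ℝ} {E : ℝ}
  (ht : ∀ᵐ y ∂ν, y ∈ t) (hHE : ∀ p ∈ s ×ˢ t, ‖H p‖ ≤ E)
include ht hHE

lemma integrable_prodMk_left_of_norm_le (hH : StronglyMeasurable H) {x : α} (hx : x ∈ s) :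
    Integrable (fun y ↦ H (x, y)) ν :=
  .of_bound (hH.comp_measurable measurable_prodMk_left).aestronglyMeasurable E
    (ht.mono fun _ hy ↦ hHE _ ⟨hx, hy⟩)

omit [MeasurableSpace α] in
lemma norm_integral_prodMk_left_le {x : α} (hx : x ∈ s) : ‖∫ y, H (x, y) ∂ν‖ ≤ E := by
  simpa using norm_integral_le_of_norm_le_const (ht.mono fun y hy ↦ hHE (x, y) ⟨hx, hy⟩)

lemma antitoneOn_integral_prodMk_left [Preorder α] [Preorder β] (hH : StronglyMeasurable H)
    (hHa : AntitoneOn H (s ×ˢ t)) : AntitoneOn (fun x ↦ ∫ y, H (x, y) ∂ν) s :=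
  fun _ hx _ hx' hxx' ↦ integral_mono_ae (integrable_prodMk_left_of_norm_le ht hHE hH hx')
    (integrable_prodMk_left_of_norm_le ht hHE hH hx)
    (ht.mono fun _ hy ↦ hHa ⟨hx, hy⟩ ⟨hx', hy⟩ ⟨hxx', le_rfl⟩)

lemma integrable_integral_prodMk_left_of_norm_le {μ : Measure α} [IsFiniteMeasure μ]
    (hs : ∀ᵐ x ∂μ, x ∈ s) (hH : StronglyMeasurable H) :
    Integrable (fun x ↦ ∫ y, H (x, y) ∂ν) μ :=
  .of_bound hH.integral_prod_right'.aestronglyMeasurable E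
    (hs.mono fun _ ↦ norm_integral_prodMk_left_le ht hHE)

end Marginal

theorem integral_mul_integral_le_integral_mul_of_antitoneOn_prod [LinearOrder α] [LinearOrder β]
    {μ : Measure α} {ν : Measure β} [IsProbabilityMeasure μ] [IsProbabilityMeasure ν]
    {s : Set α} {t : Set β} {F G : α × β → ℝ} {C D : ℝ}
    (hs : ∀ᵐ x ∂μ, x ∈ s) (ht : ∀ᵐ y ∂ν, y ∈ t)
    (hFm : StronglyMeasurable F) (hGm : StronglyMeasurable G)
    (hFC : ∀ p ∈ s ×ˢ t, ‖F p‖ ≤ C) (hGD : ∀ p ∈ s ×ˢ t, ‖G p‖ ≤ D)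
    (hF : AntitoneOn F (s ×ˢ t)) (hG : AntitoneOn G (s ×ˢ t)) :
    (∫ p, F p ∂μ.prod ν) * (∫ p, G p ∂μ.prod ν) ≤ ∫ p, F p * G p ∂μ.prod ν := by
  have hst : ∀ᵐ p ∂μ.prod ν, p ∈ s ×ˢ t :=
    (Measure.quasiMeasurePreserving_fst.ae hs).and (Measure.quasiMeasurePreserving_snd.ae ht)
  have norm_mul_le : ∀ {a b : ℝ}, ‖a‖ ≤ C → ‖b‖ ≤ D → ‖a * b‖ ≤ C * D := fun ha hb ↦ by
    rw [norm_mul]; exact mul_le_mul ha hb (norm_nonneg _) ((norm_nonneg _).trans ha)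
  have hFGm : StronglyMeasurable fun p ↦ F p * G p := hFm.mul hGm
  have hFGC : ∀ p ∈ s ×ˢ t, ‖F p * G p‖ ≤ C * D := fun p hp ↦ norm_mul_le (hFC p hp) (hGD p hp)
  have slice_antitoneOn : ∀ {H : α × β → ℝ}, AntitoneOn H (s ×ˢ t) → ∀ {x}, x ∈ s →
      AntitoneOn (fun y ↦ H (x, y)) t := fun hH _ hx _ hy _ hy' hyy' ↦
    hH ⟨hx, hy⟩ ⟨hx, hy'⟩ ⟨le_rfl, hyy'⟩
  have hinner : ∀ x ∈ s, (∫ y, F (x, y) ∂ν) * (∫ y, G (x, y) ∂ν) ≤ ∫ y, F (x, y) * G (x, y) ∂ν :=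
    fun x hx ↦ integral_mul_integral_le_integral_mul_of_monovaryOn ht
      ((slice_antitoneOn hF hx).monovaryOn (slice_antitoneOn hG hx))
      (integrable_prodMk_left_of_norm_le ht hFC hFm hx)
      (integrable_prodMk_left_of_norm_le ht hGD hGm hx)
      (integrable_prodMk_left_of_norm_le ht hFGC hFGm hx)
  have hmarginals : Integrable (fun x ↦ (∫ y, F (x, y) ∂ν) * (∫ y, G (x, y) ∂ν)) μ :=
    .of_bound (hFm.integral_prod_right'.mul hGm.integral_prod_right').aestronglyMeasurable (C * D)
      (hs.mono fun _ hx ↦ norm_mul_le (norm_integral_prodMk_left_le ht hFC hx)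
        (norm_integral_prodMk_left_le ht hGD hx))
  rw [integral_prod _ (.of_bound hFm.aestronglyMeasurable _ (hst.mono hFC)),
    integral_prod _ (.of_bound hGm.aestronglyMeasurable _ (hst.mono hGD)),
    integral_prod _ (.of_bound hFGm.aestronglyMeasurable _ (hst.mono hFGC))]
  calc _ ≤ ∫ x, (∫ y, F (x, y) ∂ν) * (∫ y, G (x, y) ∂ν) ∂μ :=
        integral_mul_integral_le_integral_mul_of_monovaryOn hs
          ((antitoneOn_integral_prodMk_left ht hFC hFm hF).monovaryOn
            (antitoneOn_integral_prodMk_left ht hGD hGm hG))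
          (integrable_integral_prodMk_left_of_norm_le ht hFC hs hFm)
          (integrable_integral_prodMk_left_of_norm_le ht hGD hs hGm) hmarginals
    _ ≤ _ := integral_mono_ae hmarginals
        (integrable_integral_prodMk_left_of_norm_le ht hFGC hs hFGm) (hs.mono hinner)

theorem ProbabilityTheory.IndepFun.integral_mul_integral_le_integral_mul_of_antitoneOn
    [LinearOrder α] [LinearOrder β] {P : Measure Ω} [IsProbabilityMeasure P]
    {X : Ω → α} {Y : Ω → β} {s : Set α} {t : Set β} {F G : α × β → ℝ} {C D : ℝ}
    (hXY : IndepFun X Y P) (hX : Measurable X) (hY : Measurable Y)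
    (hs : MeasurableSet s) (ht : MeasurableSet t) (hXs : ∀ᵐ ω ∂P, X ω ∈ s)
    (hYt : ∀ᵐ ω ∂P, Y ω ∈ t) (hFm : StronglyMeasurable F) (hGm : StronglyMeasurable G)
    (hFC : ∀ p ∈ s ×ˢ t, ‖F p‖ ≤ C) (hGD : ∀ p ∈ s ×ˢ t, ‖G p‖ ≤ D)
    (hF : AntitoneOn F (s ×ˢ t)) (hG : AntitoneOn G (s ×ˢ t)) :
    (∫ ω, F (X ω, Y ω) ∂P) * (∫ ω, G (X ω, Y ω) ∂P) ≤ ∫ ω, F (X ω, Y ω) * G (X ω, Y ω) ∂P := by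
  have hXY' : AEMeasurable (fun ω ↦ (X ω, Y ω)) P := (hX.prodMk hY).aemeasurable
  have := Measure.isProbabilityMeasure_map (μ := P) hX.aemeasurable
  have := Measure.isProbabilityMeasure_map (μ := P) hY.aemeasurable
  rw [← integral_map hXY' hFm.aestronglyMeasurable, ← integral_map hXY' hGm.aestronglyMeasurable,
    ← integral_map (f := fun p ↦ F p * G p) hXY' (hFm.mul hGm).aestronglyMeasurable,
    hXY.map_prod_eq_prod_map_map hX.aemeasurable hY.aemeasurable]
  exact integral_mul_integral_le_integral_mul_of_antitoneOn_prod
    ((ae_map_iff hX.aemeasurable hs).2 hXs) ((ae_map_iff hY.aemeasurable ht).2 hYt)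
    hFm hGm hFC hGD hF hG

end Correlation

theorem E0_submartingale_general {Ω : Type*} [MeasurableSpace Ω] (μ : Measure Ω)
    [IsProbabilityMeasure μ] (Z1 Z2 : Ω → ℝ)
    (hm1 : Measurable Z1) (hm2 : Measurable Z2)
    (hindep : ProbabilityTheory.IndepFun Z1 Z2 μ)
    (hr1 : ∀ ω, Z1 ω ∈ Set.Icc (0:ℝ) 1) (hr2 : ∀ ω, Z2 ω ∈ Set.Icc (0:ℝ) 1)
    (ρ : ℝ) (hρ : 0 ≤ ρ) :
    (∫ ω, g ρ (Z1 ω) ∂μ) * (∫ ω, g ρ (Z2 ω) ∂μ) ≥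
      (∫ ω, g ρ (Z1 ω * Z2 ω) ∂μ) * (∫ ω, h ρ (Z1 ω) (Z2 ω) ∂μ) := by
  have hg := measurable_g ρ
  have norm_le_one : ∀ {x : ℝ}, x ∈ Icc (0 : ℝ) 1 → ‖x‖ ≤ 1 := fun hx ↦ by
    rw [Real.norm_of_nonneg hx.1]; exact hx.2
  have hgg : Integrable (fun ω ↦ g ρ (Z1 ω) * g ρ (Z2 ω)) μ :=
    .of_bound ((hg.comp hm1).mul (hg.comp hm2)).aestronglyMeasurable 1 (ae_of_all _ fun ω ↦ by
      rw [norm_mul]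
      exact mul_le_one₀ (norm_le_one (g_mem_Icc hρ (hr1 ω))) (norm_nonneg _)
        (norm_le_one (g_mem_Icc hρ (hr2 ω))))
  rw [ge_iff_le, ← hindep.integral_fun_comp_mul_comp hm1.aemeasurable hm2.aemeasurable
    hg.aestronglyMeasurable hg.aestronglyMeasurable]
  calc _ ≤ ∫ ω, g ρ (Z1 ω * Z2 ω) * h ρ (Z1 ω) (Z2 ω) ∂μ :=
        hindep.integral_mul_integral_le_integral_mul_of_antitoneOn hm1 hm2 measurableSet_Icc
          measurableSet_Icc (ae_of_all _ hr1) (ae_of_all _ hr2)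
          (hg.comp (measurable_fst.mul measurable_snd)).stronglyMeasurable
          (measurable_h ρ).stronglyMeasurable
          (fun p hp ↦ norm_le_one (g_mem_Icc hρ (unitInterval.mul_mem hp.1 hp.2)))
          (fun p hp ↦ norm_le_one (h_mem_Icc hρ hp.1 hp.2)) (antitoneOn_g_mul hρ) (antitoneOn_h hρ)
    _ ≤ _ := integral_mono_of_nonneg (ae_of_all _ fun ω ↦ mul_nonneg
          (g_mem_Icc hρ (unitInterval.mul_mem (hr1 ω) (hr2 ω))).1 (h_mem_Icc hρ (hr1 ω) (hr2 ω)).1)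
        hgg (ae_of_all _ fun ω ↦ g_mul_mul_h_le_g_mul_g hρ (hr1 ω) (hr2 ω))

theorem E0_submartingale {Ω : Type*} [MeasurableSpace Ω] (μ : Measure Ω)
    [IsProbabilityMeasure μ] (Z1 Z2 : Ω → ℝ)
    (hm1 : Measurable Z1) (hm2 : Measurable Z2)
    (hindep : ProbabilityTheory.IndepFun Z1 Z2 μ)
    (hid : ProbabilityTheory.IdentDistrib Z1 Z2 μ μ)
    (hr1 : ∀ ω, Z1 ω ∈ Set.Icc (0:ℝ) 1) (hr2 : ∀ ω, Z2 ω ∈ Set.Icc (0:ℝ) 1)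
    (ρ : ℝ) (hρ : 0 ≤ ρ) :
    (∫ ω, g ρ (Z1 ω) ∂μ) * (∫ ω, g ρ (Z2 ω) ∂μ) ≥
      (∫ ω, g ρ (Z1 ω * Z2 ω) ∂μ) * (∫ ω, h ρ (Z1 ω) (Z2 ω) ∂μ) :=
  E0_submartingale_general μ Z1 Z2 hm1 hm2 hindep hr1 hr2 ρ hρ
end

section
/- For the minus polar transform W⁻(y1,y2|u1) = Σ_{u2} (1/2)W(y1|u1⊕u2)W(y2|u2), one has exp(-E0(ρ,W⁻)) = Σ_{y1,y2} q(y1)q(y2)·g(ρ, Δ(y1)·Δ(y2)), i.e., E0(ρ,W⁻) = -log E[g(ρ, Z1·Z2)] with Z1, Z2 i.i.d. copies of |Δ(Y)|, Y ∼ q. -/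
open Real

lemma key (a b c d ρ : ℝ) (ha : 0 ≤ a) (hb : 0 ≤ b) (hc : 0 ≤ c) (hd : 0 ≤ d)
    (hρ : 0 ≤ ρ) :
    ((1/2) * (1/2 * a * c + 1/2 * b * d) ^ (1/(1+ρ))
      + (1/2) * (1/2 * b * c + 1/2 * a * d) ^ (1/(1+ρ))) ^ (1+ρ)
      = ((a+b)/2) * ((c+d)/2) * g ρ (((a-b)/(a+b)) * ((c-d)/(c+d))) := by
  have hρ1 : (0:ℝ) < 1 + ρ := by linarith
  by_cases hab : a + b = 0
  · have ha0 : a = 0 := by linarith [hb]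
    have hb0 : b = 0 := by linarith [ha]
    simp only [ha0, hb0, mul_zero, zero_mul, add_zero, zero_add,
      Real.zero_rpow (by positivity : (1:ℝ)/(1+ρ) ≠ 0)]
    simp [Real.zero_rpow hρ1.ne']
  by_cases hcd : c + d = 0
  · have hc0 : c = 0 := by linarith [hd]
    have hd0 : d = 0 := by linarith [hc]
    simp only [hc0, hd0, mul_zero, zero_mul, add_zero, zero_add,
      Real.zero_rpow (by positivity : (1:ℝ)/(1+ρ) ≠ 0)]
    simp [Real.zero_rpow hρ1.ne']
  have hab' : 0 < a + b := lt_of_le_of_ne (by linarith) (Ne.symm hab)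
  have hcd' : 0 < c + d := lt_of_le_of_ne (by linarith) (Ne.symm hcd)
  set z : ℝ := ((a-b)/(a+b)) * ((c-d)/(c+d)) with hz
  set Q : ℝ := ((a+b)/2) * ((c+d)/2) with hQdef
  have hQ : 0 < Q := by positivity
  have h1 : 1 + z = (2*(a*c+b*d))/((a+b)*(c+d)) := by
    rw [hz]; field_simp; ring
  have h2 : 1 - z = (2*(b*c+a*d))/((a+b)*(c+d)) := by
    rw [hz]; field_simp; ring
  have hz1 : 0 ≤ 1 + z := by rw [h1]; positivity
  have hz2 : 0 ≤ 1 - z := by rw [h2]; positivity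
  have e1 : 1/2 * a * c + 1/2 * b * d = Q * (1+z) := by
    rw [h1, hQdef]; field_simp
  have e2 : 1/2 * b * c + 1/2 * a * d = Q * (1-z) := by
    rw [h2, hQdef]; field_simp
  rw [e1, e2, Real.mul_rpow hQ.le hz1, Real.mul_rpow hQ.le hz2]
  have e3 : (1/2) * (Q ^ (1/(1+ρ)) * (1+z) ^ (1/(1+ρ)))
      + (1/2) * (Q ^ (1/(1+ρ)) * (1-z) ^ (1/(1+ρ)))
      = Q ^ (1/(1+ρ)) * ((1/2) * (1+z) ^ (1/(1+ρ)) + (1/2) * (1-z) ^ (1/(1+ρ))) := by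
    ring
  have hinner : 0 ≤ (1/2) * (1+z) ^ (1/(1+ρ)) + (1/2) * (1-z) ^ (1/(1+ρ)) :=
    add_nonneg (mul_nonneg (by norm_num) (Real.rpow_nonneg hz1 _))
      (mul_nonneg (by norm_num) (Real.rpow_nonneg hz2 _))
  rw [e3, Real.mul_rpow (Real.rpow_nonneg hQ.le _) hinner, ← Real.rpow_mul hQ.le]
  have h4 : (1/(1+ρ)) * (1+ρ) = 1 := by field_simp
  rw [h4, Real.rpow_one]
  unfold g
  rfl


theorem E0_minus_as_expectation {Y : Type*} [Fintype Y] (W : Y → Bool → ℝ)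
    (hW : ∀ y x, 0 ≤ W y x) (hsum : ∀ x, ∑ y, W y x = 1) (ρ : ℝ) (hρ : 0 ≤ ρ)
    (Wm : Y × Y → Bool → ℝ)
    (hWm : ∀ y1 y2 u1, Wm (y1, y2) u1 = ∑ u2, (1/2) * W y1 (xor u1 u2) * W y2 u2) :
    Real.exp (-(- Real.log (∑ p : Y × Y, ((1/2) * (Wm p false) ^ (1/(1+ρ))
        + (1/2) * (Wm p true) ^ (1/(1+ρ))) ^ (1+ρ)))) =
      ∑ y1, ∑ y2, ((W y1 false + W y1 true)/2) * ((W y2 false + W y2 true)/2) *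
        g ρ (((W y1 false - W y1 true)/(W y1 false + W y1 true)) *
             ((W y2 false - W y2 true)/(W y2 false + W y2 true))) := by
  have hρ1 : (0:ℝ) < 1 + ρ := by linarith
  have hWmf : ∀ y1 y2, Wm (y1, y2) false
      = 1/2 * W y1 false * W y2 false + 1/2 * W y1 true * W y2 true := by
    intro y1 y2; rw [hWm]; simp [Fintype.sum_bool]; ring
  have hWmt : ∀ y1 y2, Wm (y1, y2) true
      = 1/2 * W y1 true * W y2 false + 1/2 * W y1 false * W y2 true := by
    intro y1 y2; rw [hWm]; simp [Fintype.sum_bool]; ring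
  have hWmnn : ∀ p u, 0 ≤ Wm p u := by
    rintro ⟨y1, y2⟩ u
    rw [hWm]
    exact Finset.sum_nonneg fun u2 _ => by
      have := hW y1 (xor u u2); have := hW y2 u2; positivity
  -- positivity of the sum
  obtain ⟨y0, hy0⟩ : ∃ y, 0 < W y false := by
    by_contra h
    push_neg at h
    have h0 : ∀ y, W y false = 0 := fun y => le_antisymm (h y) (hW y false)
    have := hsum false
    simp [h0] at this
  have htermnn : ∀ p : Y × Y, 0 ≤ ((1/2) * (Wm p false) ^ (1/(1+ρ))
      + (1/2) * (Wm p true) ^ (1/(1+ρ))) ^ (1+ρ) := by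
    intro p
    apply Real.rpow_nonneg
    exact add_nonneg (mul_nonneg (by norm_num) (Real.rpow_nonneg (hWmnn p false) _))
      (mul_nonneg (by norm_num) (Real.rpow_nonneg (hWmnn p true) _))
  have hpos : 0 < ((1/2) * (Wm (y0, y0) false) ^ (1/(1+ρ))
      + (1/2) * (Wm (y0, y0) true) ^ (1/(1+ρ))) ^ (1+ρ) := by
    apply Real.rpow_pos_of_pos
    have h1 : 0 < Wm (y0, y0) false := by
      rw [hWmf]
      have := hW y0 true
      nlinarith [hy0]
    have h2 : 0 < (1/2 : ℝ) * (Wm (y0, y0) false) ^ (1/(1+ρ)) := by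
      have := Real.rpow_pos_of_pos h1 (1/(1+ρ)); linarith
    have h3 : 0 ≤ (1/2 : ℝ) * (Wm (y0, y0) true) ^ (1/(1+ρ)) :=
      mul_nonneg (by norm_num) (Real.rpow_nonneg (hWmnn _ true) _)
    linarith
  have hS : 0 < ∑ p : Y × Y, ((1/2) * (Wm p false) ^ (1/(1+ρ))
      + (1/2) * (Wm p true) ^ (1/(1+ρ))) ^ (1+ρ) := by
    have hle := Finset.single_le_sum (f := fun p : Y × Y =>
      ((1/2) * (Wm p false) ^ (1/(1+ρ)) + (1/2) * (Wm p true) ^ (1/(1+ρ))) ^ (1+ρ))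
      (fun p _ => htermnn p) (Finset.mem_univ (y0, y0))
    linarith
  rw [neg_neg, Real.exp_log hS, Fintype.sum_prod_type]
  refine Finset.sum_congr rfl fun y1 _ => Finset.sum_congr rfl fun y2 _ => ?_
  rw [hWmf, hWmt]
  exact key _ _ _ _ ρ (hW y1 false) (hW y1 true) (hW y2 false) (hW y2 true) hρ
end
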